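/- arXiv:1410.2164 — 11 statements merged into one kernel-verified Lean document; each statement's English description precedes it below -/
import Mathlib

section
/- Suppose det(W) ≠ 0. Let U and V be unimodular n×n integer matrices (det(U), det(V) ∈ {1, −1}) and let d₁, …, dₙ be integers with dᵢ dividing dᵢ₊₁ for every i, such that U W V = diag(d₁, …, dₙ). If Q belongs to Q_G and has level ℓ, then ℓ divides dₙ. -/
open Matrix

private lemma castMulVecAux {n : ℕ} (M : Matrix (Fin n) (Fin n) ℤ) (v : Fin n → ℤ) (i : Fin n) :
    ((M.mulVec v i : ℤ) : ℚ) = (M.map (Int.cast : ℤ → ℚ)).mulVec (fun k => (v k : ℚ)) i := by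
  simp [Matrix.mulVec, dotProduct, Matrix.map_apply]

private lemma mapMulAux {n : ℕ} (M N : Matrix (Fin n) (Fin n) ℤ) :
    (M * N).map (Int.cast : ℤ → ℚ) = M.map (Int.cast : ℤ → ℚ) * N.map (Int.cast : ℤ → ℚ) := by
  ext i j
  simp only [Matrix.mul_apply, Matrix.map_apply]
  push_cast
  ring

private lemma mapPowAux {n : ℕ} (M : Matrix (Fin n) (Fin n) ℤ) (k : ℕ) :
    (M ^ k).map (Int.cast : ℤ → ℚ) = (M.map (Int.cast : ℤ → ℚ)) ^ k := by
  induction k with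
  | zero => ext i j; by_cases h : i = j <;> simp [Matrix.map_apply, Matrix.one_apply, h]
  | succ k ih => rw [pow_succ, pow_succ, ← ih, mapMulAux]

/-- The level `ℓ` of any `Q ∈ Q_G` divides the last elementary
divisor `dₙ` of the walk-matrix `W`. -/
theorem stmt_3 (n : ℕ) (hn : 0 < n)
    (A : Matrix (Fin n) (Fin n) ℤ)
    (hA_symm : Aᵀ = A)
    (hA_diag : ∀ i, A i i = 0)
    (hA_01 : ∀ i j, A i j = 0 ∨ A i j = 1)
    (W : Matrix (Fin n) (Fin n) ℤ)
    (hW : W = Matrix.of fun (i j : Fin n) => (A ^ (j : ℕ)).mulVec (fun _ => (1 : ℤ)) i)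
    (hdet : W.det ≠ 0)
    (U V : Matrix (Fin n) (Fin n) ℤ)
    (hU : U.det = 1 ∨ U.det = -1)
    (hV : V.det = 1 ∨ V.det = -1)
    (d : Fin n → ℤ)
    (hd_div : ∀ i j : Fin n, i ≤ j → d i ∣ d j)
    (hSNF : U * W * V = Matrix.diagonal d)
    (Q : Matrix (Fin n) (Fin n) ℚ)
    (hQ_orth : Qᵀ * Q = 1)
    (hQ_e : Q.mulVec (fun _ => (1 : ℚ)) = (fun _ => (1 : ℚ)))
    (hQ_symm : (Qᵀ * A.map (Int.cast : ℤ → ℚ) * Q)ᵀ = Qᵀ * A.map (Int.cast : ℤ → ℚ) * Q)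
    (hQ_diag : ∀ i, (Qᵀ * A.map (Int.cast : ℤ → ℚ) * Q) i i = 0)
    (hQ_01 : ∀ i j, (Qᵀ * A.map (Int.cast : ℤ → ℚ) * Q) i j = 0 ∨
      (Qᵀ * A.map (Int.cast : ℤ → ℚ) * Q) i j = 1)
    (ℓ : ℕ) (hℓ_pos : 0 < ℓ)
    (hℓ_int : ∀ i j, ∃ z : ℤ, (ℓ : ℚ) * Q i j = (z : ℚ))
    (hℓ_min : ∀ m : ℕ, 0 < m → (∀ i j, ∃ z : ℤ, (m : ℚ) * Q i j = (z : ℚ)) → ℓ ≤ m) :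
    (ℓ : ℤ) ∣ d ⟨n - 1, by omega⟩ := by
  classical
  set last : Fin n := ⟨n - 1, by omega⟩ with hlast
  set Aq : Matrix (Fin n) (Fin n) ℚ := A.map (Int.cast : ℤ → ℚ) with hAq
  set Wq : Matrix (Fin n) (Fin n) ℚ := W.map (Int.cast : ℤ → ℚ) with hWq
  set Uq : Matrix (Fin n) (Fin n) ℚ := U.map (Int.cast : ℤ → ℚ) with hUq
  set Vq : Matrix (Fin n) (Fin n) ℚ := V.map (Int.cast : ℤ → ℚ) with hVq
  set e : Fin n → ℚ := fun _ => 1 with he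
  -- Q is orthogonal both ways
  have hQQ : Q * Qᵀ = 1 := mul_eq_one_comm.mp hQ_orth
  have hQte : Qᵀ.mulVec e = e := by
    have h := congrArg (Qᵀ.mulVec) hQ_e
    rw [Matrix.mulVec_mulVec, hQ_orth, Matrix.one_mulVec] at h
    exact h.symm
  -- the 0/1 matrix B with Qᵀ Aq Q = B.map cast
  set B : Matrix (Fin n) (Fin n) ℤ :=
    Matrix.of (fun i j => if (Qᵀ * Aq * Q) i j = 1 then (1 : ℤ) else 0) with hBdef
  have hB : Qᵀ * Aq * Q = B.map (Int.cast : ℤ → ℚ) := by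
    ext i j
    rcases hQ_01 i j with h | h <;>
      simp [hBdef, Matrix.map_apply, h]
  -- walk vectors transform
  have hwalk : ∀ k : ℕ, Qᵀ.mulVec ((Aq ^ k).mulVec e) =
      ((B.map (Int.cast : ℤ → ℚ)) ^ k).mulVec e := by
    intro k
    induction k with
    | zero => simpa using hQte
    | succ k ih =>
      have hQA : Qᵀ * Aq = B.map (Int.cast : ℤ → ℚ) * Qᵀ := by
        calc Qᵀ * Aq = Qᵀ * Aq * (Q * Qᵀ) := by rw [hQQ, mul_one]
        _ = (Qᵀ * Aq * Q) * Qᵀ := (Matrix.mul_assoc _ _ _).symm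
        _ = B.map (Int.cast : ℤ → ℚ) * Qᵀ := by rw [hB]
      calc Qᵀ.mulVec ((Aq ^ (k+1)).mulVec e)
          = Qᵀ.mulVec (Aq.mulVec ((Aq ^ k).mulVec e)) := by
            rw [pow_succ', ← Matrix.mulVec_mulVec]
        _ = (Qᵀ * Aq).mulVec ((Aq ^ k).mulVec e) := by rw [Matrix.mulVec_mulVec]
        _ = (B.map (Int.cast : ℤ → ℚ)).mulVec (Qᵀ.mulVec ((Aq ^ k).mulVec e)) := by
            rw [hQA, ← Matrix.mulVec_mulVec]
        _ = (B.map (Int.cast : ℤ → ℚ)).mulVec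
              (((B.map (Int.cast : ℤ → ℚ)) ^ k).mulVec e) := by rw [ih]
        _ = ((B.map (Int.cast : ℤ → ℚ)) ^ (k+1)).mulVec e := by
            rw [Matrix.mulVec_mulVec, ← pow_succ']
  -- integer walk matrix of B
  set W' : Matrix (Fin n) (Fin n) ℤ :=
    Matrix.of (fun i j => (B ^ (j : ℕ)).mulVec (fun _ => (1 : ℤ)) i) with hW'
  have hWcol : ∀ j : Fin n, (fun i => Wq i j) = (Aq ^ (j : ℕ)).mulVec e := by
    intro j
    funext i
    have h0 : Wq i j = ((A ^ (j : ℕ)).mulVec (fun _ => (1 : ℤ)) i : ℤ) := by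
      simp [hWq, hW, Matrix.map_apply]
    rw [h0, castMulVecAux, mapPowAux]
    simp [hAq, Matrix.mulVec, dotProduct, he]
  have he1 : e = fun _ => ((1 : ℤ) : ℚ) := by funext k; simp [he]
  have hQW : Qᵀ * Wq = W'.map (Int.cast : ℤ → ℚ) := by
    ext i j
    have h1 : (Qᵀ * Wq) i j = Qᵀ.mulVec (fun k => Wq k j) i := by
      simp [Matrix.mul_apply, Matrix.mulVec, dotProduct]
    rw [h1, hWcol j, congrFun (hwalk (j : ℕ)) i, ← mapPowAux, he1, ← castMulVecAux]
    simp [hW', Matrix.map_apply]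
  -- determinants and invertibility
  have hWqdet : IsUnit Wq.det := by
    have h : Wq.det = ((W.det : ℤ) : ℚ) := by
      rw [hWq]; exact (RingHom.map_det (Int.castRingHom ℚ) W).symm
    rw [h]
    exact isUnit_iff_ne_zero.mpr (by exact_mod_cast hdet)
  have hUqdet : IsUnit Uq.det := by
    have h : Uq.det = ((U.det : ℤ) : ℚ) := by
      rw [hUq]; exact (RingHom.map_det (Int.castRingHom ℚ) U).symm
    rw [h]
    rcases hU with h' | h' <;> simp [h']
  have hVqdet : IsUnit Vq.det := by
    have h : Vq.det = ((V.det : ℤ) : ℚ) := by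
      rw [hVq]; exact (RingHom.map_det (Int.castRingHom ℚ) V).symm
    rw [h]
    rcases hV with h' | h' <;> simp [h']
  -- d i are nonzero and divide d last
  have hdprod : (∏ i, d i) ≠ 0 := by
    have h1 : U.det * W.det * V.det = ∏ i, d i := by
      rw [← Matrix.det_diagonal, ← hSNF, Matrix.det_mul, Matrix.det_mul]
    rw [← h1]
    rcases hU with h | h <;> rcases hV with h' | h' <;> simp [h, h', hdet]
  have hdne : ∀ i, d i ≠ 0 := by
    intro i hi
    exact hdprod (Finset.prod_eq_zero (Finset.mem_univ i) hi)
  have hdvd_last : ∀ i, d i ∣ d last := by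
    intro i
    exact hd_div i last (by
      rw [Fin.le_def]
      simp only [hlast]
      omega)
  -- SNF over ℚ
  set Dq : Matrix (Fin n) (Fin n) ℚ := Matrix.diagonal (fun i => (d i : ℚ)) with hDq
  have hSNFq : Uq * Wq * Vq = Dq := by
    have h : (U * W * V).map (Int.cast : ℤ → ℚ)
        = (Matrix.diagonal d).map (Int.cast : ℤ → ℚ) := by rw [hSNF]
    rw [mapMulAux, mapMulAux, ← hUq, ← hWq, ← hVq] at h
    rw [h, hDq]
    ext i j
    by_cases hij : i = j <;> simp [Matrix.map_apply, Matrix.diagonal_apply, hij]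
  have hDqdet : IsUnit Dq.det := by
    rw [hDq, Matrix.det_diagonal]
    refine isUnit_iff_ne_zero.mpr ?_
    rw [Finset.prod_ne_zero_iff]
    intro i _
    exact_mod_cast hdne i
  -- Wq⁻¹ = Vq * Dq⁻¹ * Uq
  have hWinv : Wq⁻¹ = Vq * Dq⁻¹ * Uq := by
    have h1 : Dq⁻¹ = Vq⁻¹ * (Wq⁻¹ * Uq⁻¹) := by
      rw [← hSNFq, Matrix.mul_inv_rev, Matrix.mul_inv_rev]
    rw [h1, ← Matrix.mul_assoc, ← Matrix.mul_assoc,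
      Matrix.mul_nonsing_inv Vq hVqdet, Matrix.one_mul, Matrix.mul_assoc,
      Matrix.nonsing_inv_mul Uq hUqdet, Matrix.mul_one]
  -- Qᵀ in terms of integer matrices
  have hQt : Qᵀ = W'.map (Int.cast : ℤ → ℚ) * Wq⁻¹ := by
    rw [← hQW, Matrix.mul_assoc, Matrix.mul_nonsing_inv Wq hWqdet, Matrix.mul_one]
  -- inverse of Dq explicitly
  have hDinv0 : Dq⁻¹ = Matrix.diagonal (fun i => (d i : ℚ)⁻¹) := by
    apply Matrix.inv_eq_right_inv
    rw [hDq, Matrix.diagonal_mul_diagonal]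
    have h : (fun i => (d i : ℚ) * (d i : ℚ)⁻¹) = fun _ => (1 : ℚ) := by
      funext i
      exact mul_inv_cancel₀ (by exact_mod_cast hdne i)
    rw [h, Matrix.diagonal_one]
  -- (d last) • Dq⁻¹ is an integer diagonal matrix
  set E : Matrix (Fin n) (Fin n) ℤ := Matrix.diagonal (fun i => d last / d i) with hE
  have hDinv : (d last : ℚ) • Dq⁻¹ = E.map (Int.cast : ℤ → ℚ) := by
    rw [hDinv0]
    ext i j
    by_cases hij : i = j
    · subst hij
      have hne : (d i : ℚ) ≠ 0 := by exact_mod_cast hdne i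
      have hdd : ((d last / d i : ℤ) : ℚ) * (d i : ℚ) = (d last : ℚ) := by
        exact_mod_cast Int.ediv_mul_cancel (hdvd_last i)
      have hval : ((d last / d i : ℤ) : ℚ) = (d last : ℚ) * (d i : ℚ)⁻¹ := by
        field_simp
        linarith [hdd]
      simp [hE, Matrix.map_apply, Matrix.smul_apply, Matrix.diagonal_apply_eq,
        smul_eq_mul, hval]
    · simp [hE, Matrix.map_apply, Matrix.smul_apply, Matrix.diagonal_apply_ne _ hij, hij]
  -- the key integrality: (d last) • Qᵀ is an integer matrix
  set Z : Matrix (Fin n) (Fin n) ℤ := W' * (V * (E * U)) with hZ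
  have hkey : (d last : ℚ) • Qᵀ = Z.map (Int.cast : ℤ → ℚ) := by
    rw [hQt, hWinv, hZ, mapMulAux, mapMulAux, mapMulAux, ← hVq, ← hUq, ← hDinv]
    simp only [smul_mul_assoc, mul_smul_comm, Matrix.mul_assoc]
  have hd_int : ∀ i j, ∃ z : ℤ, (d last : ℚ) * Q i j = (z : ℚ) := by
    intro i j
    refine ⟨Z j i, ?_⟩
    have h := congrFun (congrFun hkey j) i
    simpa [Matrix.smul_apply, Matrix.transpose_apply, Matrix.map_apply, smul_eq_mul] using h
  -- gcd argument
  set g : ℕ := ℓ.gcd (d last).natAbs with hg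
  have hgpos : 0 < g := Nat.gcd_pos_of_pos_left _ hℓ_pos
  have hg_int : ∀ i j, ∃ z : ℤ, (g : ℚ) * Q i j = (z : ℚ) := by
    intro i j
    obtain ⟨z₁, hz₁⟩ := hℓ_int i j
    obtain ⟨z₂, hz₂⟩ := hd_int i j
    set a := Int.gcdA (ℓ : ℤ) (d last) with ha
    set b := Int.gcdB (ℓ : ℤ) (d last) with hb
    have hbez : ((Int.gcd (ℓ : ℤ) (d last) : ℤ)) = (ℓ : ℤ) * a + (d last) * b :=
      Int.gcd_eq_gcd_ab _ _
    have hgeq : (g : ℤ) = (ℓ : ℤ) * a + (d last) * b := by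
      rw [← hbez, hg]
      simp [Int.gcd]
    refine ⟨a * z₁ + b * z₂, ?_⟩
    have hgq : (g : ℚ) = (ℓ : ℚ) * (a : ℚ) + (d last : ℚ) * (b : ℚ) := by
      exact_mod_cast congrArg (Int.cast : ℤ → ℚ) hgeq
    rw [hgq]
    push_cast
    calc ((ℓ : ℚ) * a + (d last : ℚ) * b) * Q i j
        = (a : ℚ) * ((ℓ : ℚ) * Q i j) + (b : ℚ) * ((d last : ℚ) * Q i j) := by ring
      _ = (a : ℚ) * z₁ + (b : ℚ) * z₂ := by rw [hz₁, hz₂]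
  have hle : ℓ ≤ g := hℓ_min g hgpos hg_int
  have hgdvd : g ∣ ℓ := Nat.gcd_dvd_left _ _
  have hgeq2 : g = ℓ := Nat.le_antisymm (Nat.le_of_dvd hℓ_pos hgdvd) hle
  have hfin : ℓ ∣ (d last).natAbs := hgeq2 ▸ Nat.gcd_dvd_right _ _
  have h2 : ((ℓ : ℤ)) ∣ ((d last).natAbs : ℤ) := Int.ofNat_dvd.mpr hfin
  exact h2.trans (Int.natAbs_dvd.mpr dvd_rfl)
end

section
/- Suppose det(W) ≠ 0 and there exists Q in Q_G whose level ℓ is even. Then there exists a vector u ∈ ℤⁿ with every entry equal to 0 or 1, with u not congruent to the zero vector modulo 2, such that uᵀ A^k u ≡ 0 (mod 4) for every k = 0, 1, …, n−1, and moreover every entry of Wᵀ u is even. -/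
open Matrix

/-- If some `Q ∈ Q_G` has even level, then there is a (0,1)-vector
`u ≢ 0 (mod 2)` with `uᵀAᵏu ≡ 0 (mod 4)` for `k = 0, …, n-1` and `Wᵀu ≡ 0 (mod 2)`. -/
theorem stmt_6 (n : ℕ) (hn : 0 < n)
    (A : Matrix (Fin n) (Fin n) ℤ)
    (hA_symm : Aᵀ = A)
    (hA_diag : ∀ i, A i i = 0)
    (hA_01 : ∀ i j, A i j = 0 ∨ A i j = 1)
    (W : Matrix (Fin n) (Fin n) ℤ)
    (hW : W = Matrix.of fun (i j : Fin n) => (A ^ (j : ℕ)).mulVec (fun _ => (1 : ℤ)) i)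
    (hdet : W.det ≠ 0)
    (hQ : ∃ (Q : Matrix (Fin n) (Fin n) ℚ) (ℓ : ℕ),
      Qᵀ * Q = 1 ∧
      Q.mulVec (fun _ => (1 : ℚ)) = (fun _ => (1 : ℚ)) ∧
      (Qᵀ * A.map (Int.cast : ℤ → ℚ) * Q)ᵀ = Qᵀ * A.map (Int.cast : ℤ → ℚ) * Q ∧
      (∀ i, (Qᵀ * A.map (Int.cast : ℤ → ℚ) * Q) i i = 0) ∧
      (∀ i j, (Qᵀ * A.map (Int.cast : ℤ → ℚ) * Q) i j = 0 ∨
        (Qᵀ * A.map (Int.cast : ℤ → ℚ) * Q) i j = 1) ∧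
      0 < ℓ ∧
      (∀ i j, ∃ z : ℤ, (ℓ : ℚ) * Q i j = (z : ℚ)) ∧
      (∀ m : ℕ, 0 < m → (∀ i j, ∃ z : ℤ, (m : ℚ) * Q i j = (z : ℚ)) → ℓ ≤ m) ∧
      Even ℓ) :
    ∃ u : Fin n → ℤ, (∀ i, u i = 0 ∨ u i = 1) ∧
      ¬ (∀ i, (2 : ℤ) ∣ u i) ∧
      (∀ k : ℕ, k ≤ n - 1 → (4 : ℤ) ∣ u ⬝ᵥ (A ^ k).mulVec u) ∧
      (∀ i, (2 : ℤ) ∣ Wᵀ.mulVec u i) := by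
  obtain ⟨Q, ℓ, h1, h2, h3, h4, h5, hℓpos, h7, hmin, hev⟩ := hQ
  set M : Matrix (Fin n) (Fin n) ℚ := A.map (Int.cast : ℤ → ℚ) with hM
  have hQQt : Q * Qᵀ = 1 := mul_eq_one_comm.mp h1
  set B : Matrix (Fin n) (Fin n) ℚ := Qᵀ * M * Q with hB
  -- integer matrix Z with Z.map cast = ℓ • Q
  choose Z hZ using h7
  have hZmap : ∀ i j, ((Z i j : ℚ)) = (ℓ : ℚ) * Q i j := fun i j => (hZ i j).symm
  -- integer version of B
  set C : Matrix (Fin n) (Fin n) ℤ := Matrix.of (fun i j => if B i j = 0 then 0 else 1) with hC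
  have hCmap : C.map (Int.cast : ℤ → ℚ) = B := by
    ext i j
    rcases h5 i j with h | h <;> simp [hC, Matrix.map_apply, h]
  -- conjugation
  have hQM : M * Q = Q * B := by
    calc M * Q = (Q * Qᵀ) * M * Q := by rw [hQQt, one_mul]
    _ = Q * B := by rw [hB]; simp only [Matrix.mul_assoc]
  have hpowQ : ∀ k : ℕ, M ^ k * Q = Q * B ^ k := by
    intro k
    induction k with
    | zero => simp
    | succ k ih =>
      rw [pow_succ' M k, Matrix.mul_assoc, ih, ← Matrix.mul_assoc, hQM,
        Matrix.mul_assoc, ← pow_succ']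
  have hconj : ∀ k : ℕ, Qᵀ * M ^ k * Q = B ^ k := by
    intro k
    rw [Matrix.mul_assoc, hpowQ, ← Matrix.mul_assoc, h1, one_mul]
  -- B^k has integer entries
  have hBk : ∀ k : ℕ, (B ^ k) = (C ^ k).map (Int.cast : ℤ → ℚ) := by
    intro k
    rw [← hCmap]
    exact (map_pow ((Int.castRingHom ℚ).mapMatrix) C k).symm
  -- key identity over ℚ then ℤ: Zᵀ A^k Z = ℓ² C^k
  have hAkmap : ∀ k : ℕ, (A ^ k).map (Int.cast : ℤ → ℚ) = M ^ k :=
    fun k => map_pow ((Int.castRingHom ℚ).mapMatrix) A k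
  have mmul : ∀ (X Y : Matrix (Fin n) (Fin n) ℤ),
      (X * Y).map (Int.cast : ℤ → ℚ) = X.map Int.cast * Y.map Int.cast := by
    intro X Y
    ext i j
    simp only [Matrix.map_apply, Matrix.mul_apply]
    push_cast
    rfl
  have mT : ∀ (X : Matrix (Fin n) (Fin n) ℤ),
      (Xᵀ).map (Int.cast : ℤ → ℚ) = (X.map Int.cast)ᵀ := by
    intro X; ext i j; rfl
  have hZAZ : ∀ k : ℕ, (Matrix.of Z)ᵀ * A ^ k * (Matrix.of Z) = ((ℓ : ℤ)^2) • C ^ k := by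
    intro k
    have hcast : ((Matrix.of Z)ᵀ * A ^ k * (Matrix.of Z)).map (Int.cast : ℤ → ℚ)
        = (((ℓ : ℤ)^2) • C ^ k).map (Int.cast : ℤ → ℚ) := by
      have e1 : ((Matrix.of Z)ᵀ * A ^ k * (Matrix.of Z)).map (Int.cast : ℤ → ℚ)
          = ((Matrix.of Z).map (Int.cast : ℤ → ℚ))ᵀ * M ^ k
            * ((Matrix.of Z).map (Int.cast : ℤ → ℚ)) := by
        rw [mmul, mmul, mT, hAkmap]
      have e2 : (Matrix.of Z).map (Int.cast : ℤ → ℚ) = (ℓ : ℚ) • Q := by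
        ext i j; simp [Matrix.map_apply, hZmap]
      rw [e1, e2]
      have e3 : ((ℓ : ℚ) • Q)ᵀ * M ^ k * ((ℓ : ℚ) • Q)
          = ((ℓ : ℚ)^2) • (Qᵀ * M ^ k * Q) := by
        rw [Matrix.transpose_smul]
        rw [Matrix.smul_mul, Matrix.smul_mul, Matrix.mul_smul, smul_smul, sq]
      rw [e3, hconj, hBk k]
      ext i j
      simp only [Matrix.smul_apply, Matrix.map_apply, smul_eq_mul]
      push_cast
      ring
    ext i j
    have := congrArg (fun X : Matrix (Fin n) (Fin n) ℚ => X i j) hcast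
    simp only [Matrix.map_apply] at this
    exact_mod_cast this
  -- Qᵀ e = e
  have hQte : Qᵀ.mulVec (fun _ => (1 : ℚ)) = (fun _ => (1 : ℚ)) := by
    conv_lhs => rw [← h2]
    rw [Matrix.mulVec_mulVec, h1, Matrix.one_mulVec]
  have hcomm : ∀ k : ℕ, Qᵀ * M ^ k = B ^ k * Qᵀ := by
    intro k
    calc Qᵀ * M ^ k = (Qᵀ * M ^ k * Q) * Qᵀ := by
          rw [Matrix.mul_assoc, hQQt, Matrix.mul_one]
    _ = B ^ k * Qᵀ := by rw [hconj]
  have hQW : ∀ k : ℕ, Qᵀ.mulVec ((M ^ k).mulVec (fun _ => (1:ℚ)))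
      = (B ^ k).mulVec (fun _ => (1:ℚ)) := by
    intro k
    rw [Matrix.mulVec_mulVec, hcomm, ← Matrix.mulVec_mulVec, hQte]
  -- the integer identity for W: (Zᵀ W) i j = ℓ * ((C^j) e) i
  have hZW : ∀ i (j : Fin n), ((Matrix.of Z)ᵀ * W) i j
      = (ℓ : ℤ) * ((C ^ (j : ℕ)).mulVec (fun _ => (1:ℤ)) i) := by
    intro i j
    have hq : (((Matrix.of Z)ᵀ * W) i j : ℚ)
        = ((ℓ : ℤ) * ((C ^ (j : ℕ)).mulVec (fun _ => (1:ℤ)) i) : ℚ) := by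
      have lhs1 : (((Matrix.of Z)ᵀ * W) i j : ℚ)
          = (ℓ : ℚ) * (Qᵀ.mulVec ((M ^ (j:ℕ)).mulVec (fun _ => (1:ℚ)))) i := by
        rw [Matrix.mul_apply]
        push_cast
        simp only [Matrix.mulVec, Matrix.transpose_apply, dotProduct, Finset.mul_sum]
        congr 1
        ext r
        rw [Matrix.of_apply, hZmap]
        have hWr : ((W r j : ℤ) : ℚ) = ((M ^ (j:ℕ)).mulVec (fun _ => (1:ℚ))) r := by
          rw [hW, ← hAkmap]
          simp only [Matrix.of_apply, Matrix.mulVec, dotProduct, Matrix.map_apply]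
          push_cast
          ring
        rw [hWr]
        simp only [Matrix.mulVec, dotProduct, Finset.mul_sum]
        apply Finset.sum_congr rfl
        intro s _
        ring
      rw [lhs1, hQW, hBk]
      simp only [Matrix.mulVec, dotProduct, Matrix.map_apply]
      push_cast
      ring
    exact_mod_cast hq
  -- find an odd entry of Z
  have hodd : ¬ (∀ i j, (2:ℤ) ∣ Z i j) := by
    intro hall
    obtain ⟨m, hm⟩ := hev
    have hℓ2 : ℓ = 2 * m := by omega
    have hmpos : 0 < m := by omega
    have : ℓ ≤ m := by
      refine hmin m hmpos ?_
      intro i j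
      obtain ⟨z', hz'⟩ := hall i j
      refine ⟨z', ?_⟩
      have h2Q : (2 : ℚ) * ((m : ℚ) * Q i j) = 2 * (z' : ℚ) := by
        rw [← mul_assoc]
        have : (2 : ℚ) * (m : ℚ) = (ℓ : ℚ) := by push_cast [hℓ2]; ring
        rw [this, ← hZmap, hz']
        push_cast
        ring
      have := mul_left_cancel₀ (two_ne_zero (α := ℚ)) h2Q
      exact this
    omega
  push_neg at hodd
  obtain ⟨r0, i0, hr0⟩ := hodd
  -- define v, u, w
  set v : Fin n → ℤ := fun r => Z r i0 with hv
  set u : Fin n → ℤ := fun r => v r % 2 with hu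
  set w : Fin n → ℤ := fun r => v r / 2 with hw
  have hvr : ∀ r, v r = Z r i0 := fun r => rfl
  have hur : ∀ r, u r = v r % 2 := fun r => rfl
  have hwr : ∀ r, w r = v r / 2 := fun r => rfl
  have hvuw : v = u + (2:ℤ) • w := by
    funext r
    simp only [Pi.add_apply, Pi.smul_apply, smul_eq_mul]
    rw [hur, hwr]
    omega
  have hu01 : ∀ i, u i = 0 ∨ u i = 1 := fun i => Int.emod_two_eq (v i)
  refine ⟨u, hu01, ?_, ?_, ?_⟩
  · intro hall
    have h2d := hall r0
    apply hr0
    rw [← hvr r0]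
    have := hur r0
    omega
  · intro k _
    -- v ⬝ᵥ A^k v = ℓ² (C^k) i0 i0
    have hAk : (A ^ k)ᵀ = A ^ k := by rw [transpose_pow, hA_symm]
    have hvv : v ⬝ᵥ (A ^ k).mulVec v = ((Matrix.of Z)ᵀ * A ^ k * (Matrix.of Z)) i0 i0 := by
      simp only [Matrix.mul_apply, Matrix.mulVec, dotProduct, Matrix.transpose_apply,
        Matrix.of_apply, Finset.sum_mul, Finset.mul_sum]
      rw [Finset.sum_comm]
      apply Finset.sum_congr rfl
      intro r _
      apply Finset.sum_congr rfl
      intro s _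
      ring
    have h4v : (4:ℤ) ∣ v ⬝ᵥ (A ^ k).mulVec v := by
      rw [hvv, hZAZ]
      obtain ⟨m, hm⟩ := hev
      refine ⟨(m:ℤ)^2 * (C ^ k) i0 i0, ?_⟩
      simp only [Matrix.smul_apply, smul_eq_mul]
      have : (ℓ : ℤ) = 2 * m := by exact_mod_cast (by omega : ℓ = 2 * m)
      rw [this]; ring
    have hsym : ∀ (x y : Fin n → ℤ), x ⬝ᵥ (A ^ k).mulVec y = y ⬝ᵥ (A ^ k).mulVec x := by
      intro x y
      rw [Matrix.dotProduct_mulVec, ← Matrix.mulVec_transpose, hAk, dotProduct_comm]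
    have hexp : v ⬝ᵥ (A ^ k).mulVec v
        = u ⬝ᵥ (A ^ k).mulVec u + 4 * (u ⬝ᵥ (A ^ k).mulVec w) + 4 * (w ⬝ᵥ (A ^ k).mulVec w) := by
      have hs := hsym w u
      rw [hvuw]
      simp only [Matrix.mulVec_add, Matrix.mulVec_smul, add_dotProduct,
        dotProduct_add, smul_dotProduct, dotProduct_smul, smul_eq_mul]
      rw [hs]
      ring
    obtain ⟨c, hc⟩ := h4v
    rw [hexp] at hc
    exact ⟨c - (u ⬝ᵥ (A ^ k).mulVec w) - (w ⬝ᵥ (A ^ k).mulVec w), by linarith⟩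
  · intro j
    have hWv : Wᵀ.mulVec v j = ((Matrix.of Z)ᵀ * W) i0 j := by
      simp only [Matrix.mulVec, dotProduct, Matrix.mul_apply, Matrix.transpose_apply,
        Matrix.of_apply]
      apply Finset.sum_congr rfl
      intro r _
      ring
    have h2v : (2:ℤ) ∣ Wᵀ.mulVec v j := by
      rw [hWv, hZW]
      obtain ⟨m, hm⟩ := hev
      refine ⟨(m:ℤ) * ((C ^ (j:ℕ)).mulVec (fun _ => (1:ℤ)) i0), ?_⟩
      have : (ℓ : ℤ) = 2 * m := by exact_mod_cast (by omega : ℓ = 2 * m)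
      rw [this]; ring
    have hlin : Wᵀ.mulVec v j = Wᵀ.mulVec u j + 2 * Wᵀ.mulVec w j := by
      rw [hvuw, Matrix.mulVec_add, Matrix.mulVec_smul]
      simp [Pi.add_apply, Pi.smul_apply]
    obtain ⟨c, hc⟩ := h2v
    rw [hlin] at hc
    exact ⟨c - Wᵀ.mulVec w j, by linarith⟩
end

section
/- For every integer l ≥ 1, the integer eᵀ A^l e is even. -/
open Matrix

private lemma zmod2_sq : ∀ a : ZMod 2, a * a = a := by decide

private lemma alt_sum {n : ℕ} (B : Matrix (Fin n) (Fin n) (ZMod 2))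
    (hs : Bᵀ = B) (hd : ∀ i, B i i = 0) (x : Fin n → ZMod 2) :
    x ⬝ᵥ B.mulVec x = 0 := by
  have hB : ∀ i j, B j i = B i j := fun i j => by
    nth_rewrite 1 [← hs]
    rw [Matrix.transpose_apply]
  have : x ⬝ᵥ B.mulVec x
      = ∑ p ∈ Finset.univ ×ˢ Finset.univ, x p.1 * B p.1 p.2 * x p.2 := by
    rw [Finset.sum_product]
    simp [dotProduct, Matrix.mulVec, Finset.mul_sum, mul_assoc]
  rw [this]
  refine Finset.sum_involution (fun p _ => (p.2, p.1)) ?_ ?_ ?_ ?_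
  · intro p _
    simp only
    rw [hB p.2 p.1]
    ring_nf
    rw [show (2 : ZMod 2) = 0 by decide]
    ring
  · intro p _ hf h
    apply hf
    have h1 : p.2 = p.1 := congrArg Prod.fst h
    rw [h1, hd]
    ring
  · intro p _; simp
  · intro p _; rfl

private lemma key_zero {n : ℕ} (B : Matrix (Fin n) (Fin n) (ZMod 2))
    (hs : Bᵀ = B) (hd : ∀ i, B i i = 0) :
    ∀ l : ℕ, 1 ≤ l →
      (fun _ => (1 : ZMod 2)) ⬝ᵥ (B ^ l).mulVec (fun _ => 1) = 0 := by
  intro l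
  induction l using Nat.strong_induction_on with
  | _ l ih =>
    intro hl
    rcases Nat.even_or_odd l with he | ho
    · obtain ⟨k, hk⟩ := he
      have hk1 : 1 ≤ k := by omega
      have hpow : B ^ l = B ^ k * B ^ k := by rw [hk, pow_add]
      have hsym : (B ^ k)ᵀ = B ^ k := by rw [transpose_pow, hs]
      set x := (B ^ k).mulVec (fun _ => (1 : ZMod 2)) with hx
      have hv : (fun _ => (1 : ZMod 2)) ᵥ* (B ^ k) = x := by
        rw [← hsym, vecMul_transpose]
      rw [hpow, ← mulVec_mulVec, dotProduct_mulVec, hv, ← hx]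
      have hxx : x ⬝ᵥ x = (fun _ => (1 : ZMod 2)) ⬝ᵥ x := by
        unfold dotProduct
        exact Finset.sum_congr rfl fun i _ => by rw [zmod2_sq, one_mul]
      rw [hxx]
      exact ih k (by omega) hk1
    · obtain ⟨k, hk⟩ := ho
      have hpow : B ^ l = B ^ k * (B * B ^ k) := by
        have h2 : l = k + (1 + k) := by omega
        rw [h2, pow_add, pow_add, pow_one]
      have hsym : (B ^ k)ᵀ = B ^ k := by rw [transpose_pow, hs]
      set x := (B ^ k).mulVec (fun _ => (1 : ZMod 2)) with hx
      have hv : (fun _ => (1 : ZMod 2)) ᵥ* (B ^ k) = x := by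
        rw [← hsym, vecMul_transpose]
      rw [hpow, ← mulVec_mulVec, dotProduct_mulVec, hv, ← mulVec_mulVec, ← hx]
      exact alt_sum B hs hd x

/-- `eᵀ Aˡ e` is even for every integer `l ≥ 1`. -/
theorem stmt_7 (n : ℕ) (hn : 0 < n)
    (A : Matrix (Fin n) (Fin n) ℤ)
    (hA_symm : Aᵀ = A)
    (hA_diag : ∀ i, A i i = 0)
    (hA_01 : ∀ i j, A i j = 0 ∨ A i j = 1) :
    ∀ l : ℕ, 1 ≤ l →
      Even ((fun _ => (1 : ℤ)) ⬝ᵥ (A ^ l).mulVec (fun _ => (1 : ℤ))) := by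
  intro l hl
  set f : ℤ →+* ZMod 2 := Int.castRingHom (ZMod 2)
  set B : Matrix (Fin n) (Fin n) (ZMod 2) := A.map f with hB
  have hBs : Bᵀ = B := by
    rw [hB, ← Matrix.transpose_map, hA_symm]
  have hBd : ∀ i, B i i = 0 := fun i => by
    simp [hB, Matrix.map_apply, hA_diag i]
  have hcast : (f ((fun _ => (1 : ℤ)) ⬝ᵥ (A ^ l).mulVec (fun _ => (1 : ℤ))) : ZMod 2)
      = (fun _ => (1 : ZMod 2)) ⬝ᵥ (B ^ l).mulVec (fun _ => 1) := by
    have hmap : (A ^ l).map f = B ^ l := by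
      have := map_pow (f.mapMatrix) A l
      rw [hB]
      simpa [RingHom.mapMatrix_apply] using this
    simp only [dotProduct, Matrix.mulVec, map_sum, _root_.map_mul, _root_.map_one, one_mul, mul_one]
    refine Finset.sum_congr rfl fun i _ => Finset.sum_congr rfl fun j _ => ?_
    rw [← hmap]
    rfl
  have h0 := key_zero B hBs hBd l hl
  have hz : f ((fun _ => (1 : ℤ)) ⬝ᵥ (A ^ l).mulVec (fun _ => (1 : ℤ))) = 0 := by
    rw [hcast]; exact h0
  have hdvd : (2 : ℤ) ∣ ((fun _ => (1 : ℤ)) ⬝ᵥ (A ^ l).mulVec (fun _ => (1 : ℤ))) :=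
    (ZMod.intCast_zmod_eq_zero_iff_dvd _ 2).mp hz
  obtain ⟨c, hc⟩ := hdvd
  exact ⟨c, by omega⟩
end

section
/- rank₂(W) ≤ ⌈n/2⌉, i.e., the rank over 𝔽₂ of the walk-matrix W reduced modulo 2 is at most ⌈n/2⌉. -/
open Matrix LinearMap

set_option maxHeartbeats 1000000 in
set_option synthInstance.maxHeartbeats 400000 in
/-- Rank-nullity style bound for a map restricted to a submodule. -/
lemma finrank_le_map_add_ker {F V W : Type*} [Field F] [AddCommGroup V] [Module F V]
    [AddCommGroup W] [Module F W] [FiniteDimensional F V] [FiniteDimensional F W]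
    (g : V →ₗ[F] W) (p : Submodule F V) :
    Module.finrank F p ≤ Module.finrank F (p.map g) + Module.finrank F (ker g) := by
  classical
  have h1 : Module.finrank F (range (g.domRestrict p)) +
      Module.finrank F (ker (g.domRestrict p)) = Module.finrank F p :=
    LinearMap.finrank_range_add_finrank_ker (g.domRestrict p)
  have h2 : range (g.domRestrict p) = p.map g := LinearMap.range_domRestrict p g
  have hker : ker (g.domRestrict p) = (ker g).comap p.subtype := by
    ext x; simp [LinearMap.mem_ker]
  have h3 : Module.finrank F (ker (g.domRestrict p)) ≤ Module.finrank F (ker g) := by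
    rw [hker]
    have heq := Submodule.equivMapOfInjective p.subtype p.injective_subtype
      ((ker g).comap p.subtype)
    rw [LinearEquiv.finrank_eq heq]
    apply Submodule.finrank_mono
    rw [Submodule.map_comap_eq]
    exact inf_le_right
  rw [h2] at h1
  omega

set_option maxHeartbeats 1000000 in
set_option synthInstance.maxHeartbeats 400000 in
/-- Sylvester rank inequality over a field. -/
lemma sylvester_rank_ineq {F : Type*} [Field F] {n : ℕ} (B C : Matrix (Fin n) (Fin n) F) :
    B.rank + C.rank ≤ n + (C * B).rank := by
  classical
  have h := finrank_le_map_add_ker C.mulVecLin (range B.mulVecLin)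
  have h2 : (range B.mulVecLin).map C.mulVecLin = range (C * B).mulVecLin := by
    rw [Matrix.mulVecLin_mul, LinearMap.range_comp]
  have h4 : Module.finrank F (range C.mulVecLin) + Module.finrank F (ker C.mulVecLin)
      = n := by
    rw [LinearMap.finrank_range_add_finrank_ker C.mulVecLin, Module.finrank_pi,
      Fintype.card_fin]
  have hB : B.rank = Module.finrank F (range B.mulVecLin) := rfl
  have hC : C.rank = Module.finrank F (range C.mulVecLin) := rfl
  have hCB : (C * B).rank = Module.finrank F (range (C * B).mulVecLin) := rfl
  rw [h2] at h
  omega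

/-- The quadratic form of a symmetric zero-diagonal matrix over `ZMod 2` vanishes. -/
lemma qform_zero {n : ℕ} (B : Matrix (Fin n) (Fin n) (ZMod 2)) (hsymm : Bᵀ = B)
    (hdiag : ∀ i, B i i = 0) (x : Fin n → ZMod 2) : x ⬝ᵥ (B *ᵥ x) = 0 := by
  classical
  have : x ⬝ᵥ (B *ᵥ x) = ∑ p ∈ Finset.univ ×ˢ Finset.univ,
      x p.1 * B p.1 p.2 * x p.2 := by
    rw [Finset.sum_product]
    simp [dotProduct, mulVec, Finset.mul_sum, mul_assoc]
  rw [this]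
  apply Finset.sum_ninvolution Prod.swap
  · intro ⟨a, b⟩
    have hBsymm : B b a = B a b := by conv_lhs => rw [← hsymm, Matrix.transpose_apply]
    simp only [Prod.swap]
    rw [hBsymm]
    ring_nf
    rw [show (2 : ZMod 2) = 0 from rfl, mul_zero]
  · intro ⟨a, b⟩ h heq
    apply h
    have : a = b := congrArg Prod.snd heq
    simp [this, hdiag]
  · simp
  · simp

/-- The rank of the walk-matrix `W` over `𝔽₂` is at most `⌈n/2⌉`. -/
theorem stmt_8 (n : ℕ) (hn : 0 < n)
    (A : Matrix (Fin n) (Fin n) ℤ)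
    (hA_symm : Aᵀ = A)
    (hA_diag : ∀ i, A i i = 0)
    (hA_01 : ∀ i j, A i j = 0 ∨ A i j = 1)
    (W : Matrix (Fin n) (Fin n) ℤ)
    (hW : W = Matrix.of fun (i j : Fin n) => (A ^ (j : ℕ)).mulVec (fun _ => (1 : ℤ)) i) :
    (W.map (Int.cast : ℤ → ZMod 2)).rank ≤ (n + 1) / 2 := by
  classical
  set B := W.map (Int.cast : ℤ → ZMod 2) with hB
  set A2 : Matrix (Fin n) (Fin n) (ZMod 2) := A.map (Int.cast : ℤ → ZMod 2) with hA2
  have hA2symm : A2ᵀ = A2 := by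
    rw [hA2, ← Matrix.transpose_map, hA_symm]
  have hA2diag : ∀ i, A2 i i = 0 := by
    intro i; simp [hA2, hA_diag i]
  set e : Fin n → ZMod 2 := fun _ => 1 with he
  have hmap_pow : ∀ k : ℕ, (A ^ k).map (Int.cast : ℤ → ZMod 2) = A2 ^ k := by
    intro k
    have h := map_pow ((Int.castRingHom (ZMod 2)).mapMatrix) A k
    simpa [RingHom.mapMatrix_apply] using h
  have hBent : ∀ i j : Fin n, B i j = (A2 ^ (j : ℕ) *ᵥ e) i := by
    intro i j
    rw [hB, hW]
    simp only [Matrix.map_apply, Matrix.of_apply, mulVec, dotProduct]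
    push_cast
    refine Finset.sum_congr rfl fun k _ => ?_
    rw [← hmap_pow (j : ℕ), Matrix.map_apply]
  have hpowsymm : ∀ k : ℕ, (A2 ^ k)ᵀ = A2 ^ k := by
    intro k; rw [Matrix.transpose_pow, hA2symm]
  have hsq : ∀ v : Fin n → ZMod 2, v ⬝ᵥ v = e ⬝ᵥ v := by
    intro v
    simp only [dotProduct, he]
    refine Finset.sum_congr rfl fun i _ => ?_
    rw [one_mul]
    exact (by decide : ∀ a : ZMod 2, a * a = a) _
  -- key : e ⬝ A2^m ⬝ e = 0 for m ≥ 1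
  have key : ∀ m : ℕ, 1 ≤ m → e ⬝ᵥ (A2 ^ m *ᵥ e) = 0 := by
    intro m
    induction m using Nat.strong_induction_on with
    | _ m ih =>
      intro hm
      rcases Nat.even_or_odd m with ⟨k, hk⟩ | ⟨k, hk⟩
      · have hk1 : 1 ≤ k := by omega
        have hsplit : A2 ^ m = A2 ^ k * A2 ^ k := by
          rw [← pow_add, show k + k = m by omega]
        rw [hsplit, ← Matrix.mulVec_mulVec, Matrix.dotProduct_mulVec,
          ← Matrix.mulVec_transpose, hpowsymm, hsq]
        exact ih k (by omega) hk1
      · have hsplit : A2 ^ m = A2 ^ k * (A2 * A2 ^ k) := by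
          rw [← pow_succ', ← pow_add, show k + (k + 1) = m by omega]
        rw [hsplit, ← Matrix.mulVec_mulVec, Matrix.dotProduct_mulVec,
          ← Matrix.mulVec_transpose, hpowsymm, ← Matrix.mulVec_mulVec]
        exact qform_zero A2 hA2symm hA2diag _
  have hdot : ∀ i j : ℕ, (A2 ^ i *ᵥ e) ⬝ᵥ (A2 ^ j *ᵥ e) = e ⬝ᵥ (A2 ^ (i + j) *ᵥ e) := by
    intro i j
    rw [pow_add, ← Matrix.mulVec_mulVec]
    conv_lhs => rw [← hpowsymm i]
    rw [Matrix.mulVec_transpose, ← Matrix.dotProduct_mulVec]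
  have he0 : e ⬝ᵥ (A2 ^ 0 *ᵥ e) = (n : ZMod 2) := by
    simp [he, dotProduct, Matrix.one_mulVec]
  have hent : ∀ i j : Fin n, (Bᵀ * B) i j =
      if (i : ℕ) + (j : ℕ) = 0 then (n : ZMod 2) else 0 := by
    intro i j
    have h1 : (Bᵀ * B) i j = (A2 ^ (i : ℕ) *ᵥ e) ⬝ᵥ (A2 ^ (j : ℕ) *ᵥ e) := by
      simp only [Matrix.mul_apply, Matrix.transpose_apply, dotProduct]
      exact Finset.sum_congr rfl fun k _ => by rw [hBent k i, hBent k j]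
    rw [h1, hdot]
    split_ifs with h
    · rw [h]; exact he0
    · exact key _ (by omega)
  have hsyl := sylvester_rank_ineq B Bᵀ
  have htr : Bᵀ.rank = B.rank := Matrix.rank_transpose B
  rcases Nat.even_or_odd n with hev | hodd
  · -- n even: Gram matrix is zero
    have hzero : Bᵀ * B = 0 := by
      ext i j
      rw [hent]
      have hcast : (n : ZMod 2) = 0 := by
        rw [ZMod.natCast_eq_zero_iff]
        exact hev.two_dvd
      split_ifs <;> simp [hcast]
    rw [hzero, Matrix.rank_zero] at hsyl
    omega
  · -- n odd: Gram matrix has rank ≤ 1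
    set P : Matrix (Fin n) (Fin 1) (ZMod 2) :=
      Matrix.of fun i _ => if (i : ℕ) = 0 then (n : ZMod 2) else 0 with hP
    set Q : Matrix (Fin 1) (Fin n) (ZMod 2) :=
      Matrix.of fun _ j => if (j : ℕ) = 0 then 1 else 0 with hQ
    have hPQ : Bᵀ * B = P * Q := by
      ext i j
      rw [hent, Matrix.mul_apply, Fin.sum_univ_one, hP, hQ]
      simp only [Matrix.of_apply]
      split_ifs <;> simp_all <;> omega
    have hrank1 : (Bᵀ * B).rank ≤ 1 := by
      rw [hPQ]
      calc (P * Q).rank ≤ P.rank := Matrix.rank_mul_le_left P Q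
        _ ≤ Fintype.card (Fin 1) := Matrix.rank_le_card_width P
        _ = 1 := by simp
    omega
end

section
/- 2^⌊n/2⌋ divides det(W). -/
/-!
Reduce modulo 2 and write B for the reduction of A, e for the all-one vector. Over 𝔽₂ every
symmetric zero-diagonal matrix is alternating, xᵀBx = 0, and yᵢ² = yᵢ; with y = Bʲe these
give eᵀBᵏe = 0 for all k ≥ 1. Hence all columns of W mod 2 except e are orthogonal to every
column, so 2 · rank(W mod 2) ≤ n + 1 and the kernel of W mod 2 has dimension at least ⌊n/2⌋.
Finally, if W mod p has a kernel of dimension d, multiplying W by an integer lift of a basis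
adapted to that kernel produces d columns divisible by p, so pᵈ ∣ det W.
-/

open Matrix Module Finset

theorem Submodule.exists_basis_finset_mem {m K : Type*} [Fintype m] [Field K]
    (U : Submodule K (m → K)) :
    ∃ (b : Basis m K (m → K)) (s : Finset m), #s = finrank K U ∧ ∀ j ∈ s, b j ∈ U := by
  obtain ⟨C, hUC⟩ := U.exists_isCompl
  let b₀ := ((finBasis K U).prod (finBasis K C)).map (U.prodEquivOfIsCompl C hUC)
  let e : m ≃ Fin (finrank K U) ⊕ Fin (finrank K C) := (Pi.basisFun K m).indexEquiv b₀
  refine ⟨b₀.reindex e.symm, univ.map (Function.Embedding.inl.trans e.symm.toEmbedding),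
    by simp, ?_⟩
  intro j hj
  obtain ⟨i, -, rfl⟩ := Finset.mem_map.mp hj
  simp [b₀, Basis.reindex_apply]

section
variable {m : Type*} [Fintype m] [DecidableEq m]

theorem Matrix.pow_card_dvd_det_of_dvd_col {R : Type*} [CommRing R] (M : Matrix m m R) (a : R)
    (s : Finset m) (h : ∀ i, ∀ j ∈ s, a ∣ M i j) : a ^ #s ∣ M.det := by
  choose! V hV using h
  let N : Matrix m m R := of fun i j => if j ∈ s then V i j else M i j
  have hM : M = of fun i j => (if j ∈ s then a else 1) * N i j := by
    ext i j
    by_cases hj : j ∈ s <;> simp [N, hj, hV i j]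
  rw [hM, det_mul_row, Fintype.prod_ite_mem, prod_const]
  exact dvd_mul_right _ _

theorem Matrix.pow_finrank_ker_dvd_det (p : ℕ) [Fact p.Prime] (W : Matrix m m ℤ) :
    (p : ℤ) ^ finrank (ZMod p) (LinearMap.ker (W.map (Int.cast : ℤ → ZMod p)).mulVecLin) ∣
      W.det := by
  obtain ⟨b, s, hs, hbs⟩ := Submodule.exists_basis_finset_mem
    (LinearMap.ker (W.map (Int.cast : ℤ → ZMod p)).mulVecLin)
  let P : Matrix m m ℤ := of fun i j => ((b j i).cast : ℤ)
  have hP : P.map (Int.cast : ℤ → ZMod p) = (Pi.basisFun (ZMod p) m).toMatrix b := by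
    ext i j
    simp [P, Basis.toMatrix_apply]
  have hP_det : ¬ (p : ℤ) ∣ P.det := by
    have hcast : ((P.det : ℤ) : ZMod p) = (P.map (Int.cast : ℤ → ZMod p)).det :=
      (Int.castRingHom (ZMod p)).map_det P
    rw [← ZMod.intCast_zmod_eq_zero_iff_dvd, hcast, hP, ← Basis.det_apply]
    exact ((Pi.basisFun (ZMod p) m).isUnit_det b).ne_zero
  have hWP : ∀ i, ∀ j ∈ s, (p : ℤ) ∣ (W * P) i j := by
    intro i j hj
    rw [← ZMod.intCast_zmod_eq_zero_iff_dvd]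
    have hmul : (W * P).map (Int.cast : ℤ → ZMod p) = W.map Int.cast * P.map Int.cast :=
      Matrix.map_mul (f := Int.castRingHom (ZMod p))
    have := congrFun (LinearMap.mem_ker.mp (hbs j hj)) i
    rw [← map_apply (f := Int.cast), hmul, hP]
    simpa [mul_apply, mulVec, dotProduct, Basis.toMatrix_apply] using this
  rw [← hs]
  refine (Nat.prime_iff_prime_int.mp Fact.out).pow_dvd_of_dvd_mul_right _ hP_det ?_
  rw [← det_mul]
  exact pow_card_dvd_det_of_dvd_col _ _ _ hWP
end

section
variable {m : Type*} [Fintype m]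

theorem Matrix.dotProduct_mulVec_self_eq_zero_of_isSymm {R : Type*} [CommRing R] [CharP R 2]
    {B : Matrix m m R} (hB : B.IsSymm) (hd : ∀ i, B i i = 0) (x : m → R) :
    x ⬝ᵥ B *ᵥ x = 0 := by
  have hsum : x ⬝ᵥ B *ᵥ x = ∑ ij : m × m, x ij.1 * B ij.1 ij.2 * x ij.2 := by
    simp [dotProduct, mulVec, mul_sum, Fintype.sum_prod_type, mul_assoc]
  rw [hsum]
  refine sum_involution (fun ij _ => ij.swap) (fun ij _ => ?_) (fun ij _ h hswap => ?_)
    (by simp) (by simp)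
  · rw [Prod.fst_swap, Prod.snd_swap, hB.apply ij.1 ij.2]
    convert CharTwo.add_self_eq_zero (x ij.1 * B ij.1 ij.2 * x ij.2) using 1
    ring
  · obtain ⟨i, j⟩ := ij
    obtain rfl : j = i := (Prod.mk.inj hswap).1
    simp [hd] at h

theorem Matrix.IsSymm.dotProduct_mulVec_comm {R : Type*} [CommSemiring R] {C : Matrix m m R}
    (hC : C.IsSymm) (u w : m → R) : u ⬝ᵥ C *ᵥ w = C *ᵥ u ⬝ᵥ w := by
  rw [dotProduct_mulVec, ← mulVec_transpose, hC.eq]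

theorem Matrix.one_dotProduct_pow_mulVec_one [DecidableEq m] {B : Matrix m m (ZMod 2)}
    (hB : B.IsSymm) (hd : ∀ i, B i i = 0) {k : ℕ} (hk : k ≠ 0) :
    1 ⬝ᵥ (B ^ k *ᵥ 1) = 0 := by
  induction k using Nat.strong_induction_on with
  | _ k ih =>
    obtain ⟨j, rfl | rfl⟩ := Nat.even_or_odd' k
    · have hsq : ∀ y : m → ZMod 2, y ⬝ᵥ y = 1 ⬝ᵥ y := fun y =>
        sum_congr rfl fun i _ => by simp [← sq, ZMod.pow_card]
      rw [two_mul, pow_add, ← mulVec_mulVec, (hB.pow j).dotProduct_mulVec_comm, hsq]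
      exact ih j (by omega) (by omega)
    · rw [show B ^ (2 * j + 1) = B ^ j * (B * B ^ j) by rw [← pow_succ', ← pow_add]; ring_nf,
        ← mulVec_mulVec, ← mulVec_mulVec, (hB.pow j).dotProduct_mulVec_comm]
      exact dotProduct_mulVec_self_eq_zero_of_isSymm hB hd _

end

theorem Matrix.two_mul_rank_le_of_transpose_mul_apply_eq_zero {m k F : Type*} [Fintype m]
    [Fintype k] [Field F] (W : Matrix m k F) (j₀ : k)
    (h : ∀ i, ∀ j ≠ j₀, (Wᵀ * W) i j = 0) :
    2 * W.rank ≤ Fintype.card m + 1 := by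
  classical
  let W' := W.submatrix id (Subtype.val : {j // j ≠ j₀} → k)
  have hW' : Wᵀ * W' = 0 := by
    ext i j
    simpa [W', mul_apply] using h i j j.2
  have hsum := rank_add_rank_le_card_of_mul_eq_zero hW'
  have hcols : Submodule.span F (Set.range W.col) ≤
      Submodule.span F {W.col j₀} ⊔ Submodule.span F (Set.range W'.col) := by
    rw [← Submodule.span_union, Submodule.span_le]
    rintro _ ⟨j, rfl⟩
    refine Submodule.subset_span ?_
    by_cases hj : j = j₀
    · exact Or.inl (hj ▸ rfl)
    · exact Or.inr ⟨⟨j, hj⟩, rfl⟩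
  have hrank : W.rank ≤ 1 + W'.rank := by
    rw [rank_eq_finrank_span_cols, rank_eq_finrank_span_cols]
    calc _ ≤ _ := Submodule.finrank_mono hcols
      _ ≤ _ := Submodule.finrank_add_le_finrank_add_finrank _ _
      _ ≤ _ := by
        gcongr
        simpa using finrank_span_le_card ({W.col j₀} : Set (m → F))
  rw [rank_transpose] at hsum
  omega

section Walk
variable {n : ℕ}

def walkMatrix {R : Type*} [CommSemiring R] (A : Matrix (Fin n) (Fin n) R) :
    Matrix (Fin n) (Fin n) R :=
  of fun i j => (A ^ (j : ℕ) *ᵥ 1) i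

theorem walkMatrix_map {R S : Type*} [CommSemiring R] [CommSemiring S] (f : R →+* S)
    (A : Matrix (Fin n) (Fin n) R) : (walkMatrix A).map f = walkMatrix (A.map f) := by
  ext i j
  simp [walkMatrix, RingHom.map_mulVec, ← RingHom.mapMatrix_apply]

theorem transpose_walkMatrix_mul_walkMatrix_apply {B : Matrix (Fin n) (Fin n) (ZMod 2)}
    (hB : B.IsSymm) (hd : ∀ i, B i i = 0) {i j : Fin n} (hij : (i : ℕ) + j ≠ 0) :
    ((walkMatrix B)ᵀ * walkMatrix B) i j = 0 := by
  change B ^ (i : ℕ) *ᵥ 1 ⬝ᵥ B ^ (j : ℕ) *ᵥ 1 = 0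
  rw [← (hB.pow _).dotProduct_mulVec_comm, mulVec_mulVec, ← pow_add]
  exact one_dotProduct_pow_mulVec_one hB hd hij

theorem div_two_le_finrank_ker_walkMatrix (hn : 0 < n) {B : Matrix (Fin n) (Fin n) (ZMod 2)}
    (hB : B.IsSymm) (hd : ∀ i, B i i = 0) :
    n / 2 ≤ finrank (ZMod 2) (LinearMap.ker (walkMatrix B).mulVecLin) := by
  have hrank : 2 * (walkMatrix B).rank ≤ n + 1 := by
    simpa using (walkMatrix B).two_mul_rank_le_of_transpose_mul_apply_eq_zero ⟨0, hn⟩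
      fun i j hj => transpose_walkMatrix_mul_walkMatrix_apply hB hd (by simp_all [Fin.ext_iff])
  have hker := LinearMap.finrank_range_add_finrank_ker (walkMatrix B).mulVecLin
  rw [finrank_fin_fun] at hker
  unfold Matrix.rank at hrank
  omega

end Walk

theorem stmt_9_general (n : ℕ) (hn : 0 < n)
    (A : Matrix (Fin n) (Fin n) ℤ)
    (hA_symm : Aᵀ = A)
    (hA_diag : ∀ i, A i i = 0)
    (W : Matrix (Fin n) (Fin n) ℤ)
    (hW : W = Matrix.of fun (i j : Fin n) => (A ^ (j : ℕ)).mulVec (fun _ => (1 : ℤ)) i) :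
    (2 : ℤ) ^ (n / 2) ∣ W.det := by
  let B : Matrix (Fin n) (Fin n) (ZMod 2) := A.map Int.cast
  have hB : B.IsSymm := by rw [IsSymm, ← transpose_map, hA_symm]
  have hBd : ∀ i, B i i = 0 := by simp [B, hA_diag]
  have hW₂ : W.map (Int.cast : ℤ → ZMod 2) = walkMatrix B :=
    hW ▸ walkMatrix_map (Int.castRingHom (ZMod 2)) A
  calc (2 : ℤ) ^ (n / 2)
      ∣ (2 : ℤ) ^ finrank (ZMod 2) (LinearMap.ker (walkMatrix B).mulVecLin) :=
        pow_dvd_pow _ (div_two_le_finrank_ker_walkMatrix hn hB hBd)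
    _ ∣ W.det := by rw [← hW₂]; exact_mod_cast pow_finrank_ker_dvd_det 2 W

/-- `2^⌊n/2⌋` divides `det W`. -/
theorem stmt_9 (n : ℕ) (hn : 0 < n)
    (A : Matrix (Fin n) (Fin n) ℤ)
    (hA_symm : Aᵀ = A)
    (hA_diag : ∀ i, A i i = 0)
    (hA_01 : ∀ i j, A i j = 0 ∨ A i j = 1)
    (W : Matrix (Fin n) (Fin n) ℤ)
    (hW : W = Matrix.of fun (i j : Fin n) => (A ^ (j : ℕ)).mulVec (fun _ => (1 : ℤ)) i) :
    (2 : ℤ) ^ (n / 2) ∣ W.det :=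
  stmt_9_general n hn A hA_symm hA_diag W hW
end

section
/- Suppose rank₂(W) = ⌈n/2⌉. Working over 𝔽₂ (all matrices and vectors reduced modulo 2): the solution space {x ∈ 𝔽₂ⁿ : Wᵀ x = 0} equals the span of the columns of W if n is even, and equals the span of the columns Ae, A²e, …, A^{n−1}e of W (all columns of W except the first) if n is odd. -/
open Matrix

private lemma zmod2_mul_self (a : ZMod 2) : a * a = a := by revert a; decide

private lemma alt_zero {n : ℕ} (M : Matrix (Fin n) (Fin n) (ZMod 2))
    (hs : Mᵀ = M) (hd : ∀ i, M i i = 0) (x : Fin n → ZMod 2) :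
    x ⬝ᵥ (M *ᵥ x) = 0 := by
  have h1 : x ⬝ᵥ (M *ᵥ x) = ∑ p : Fin n × Fin n, x p.1 * (M p.1 p.2 * x p.2) := by
    simp [dotProduct, mulVec, Finset.mul_sum, Fintype.sum_prod_type]
  rw [h1]
  refine Finset.sum_ninvolution Prod.swap ?_ ?_ (fun a => Finset.mem_univ _) Prod.swap_swap
  · intro a
    have hsym : M a.2 a.1 = M a.1 a.2 := by conv_lhs => rw [← hs, Matrix.transpose_apply]
    have : x a.2 * (M a.2 a.1 * x a.1) = x a.1 * (M a.1 a.2 * x a.2) := by rw [hsym]; ring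
    rw [Prod.swap, this]
    exact CharTwo.add_self_eq_zero _
  · intro a hfa h
    apply hfa
    have h2 : a.2 = a.1 := congrArg Prod.fst h
    rw [h2, hd]
    ring

private lemma symm_dot {n : ℕ} (N : Matrix (Fin n) (Fin n) (ZMod 2)) (hs : Nᵀ = N)
    (v w : Fin n → ZMod 2) : (N *ᵥ v) ⬝ᵥ w = v ⬝ᵥ (N *ᵥ w) := by
  rw [Matrix.dotProduct_mulVec, ← Matrix.mulVec_transpose, hs]

private lemma map_pow_int {n : ℕ} (A : Matrix (Fin n) (Fin n) ℤ) (k : ℕ) :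
    (A ^ k).map (Int.cast : ℤ → ZMod 2) = (A.map (Int.cast : ℤ → ZMod 2)) ^ k := by
  have h : ∀ M : Matrix (Fin n) (Fin n) ℤ, M.map (Int.cast : ℤ → ZMod 2)
      = (Int.castRingHom (ZMod 2)).mapMatrix M := fun _ => rfl
  rw [h, h, map_pow]

/-- If `rank₂(W) = ⌈n/2⌉`, then over `𝔽₂` the solution space of
`Wᵀx = 0` equals the column span of `W` (for `n` even), resp. the span of the
columns `Ae, …, A^{n-1}e` (for `n` odd). -/
theorem stmt_11 (n : ℕ) (hn : 0 < n)
    (A : Matrix (Fin n) (Fin n) ℤ)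
    (hA_symm : Aᵀ = A)
    (hA_diag : ∀ i, A i i = 0)
    (hA_01 : ∀ i j, A i j = 0 ∨ A i j = 1)
    (W : Matrix (Fin n) (Fin n) ℤ)
    (hW : W = Matrix.of fun (i j : Fin n) => (A ^ (j : ℕ)).mulVec (fun _ => (1 : ℤ)) i)
    (hrank : (W.map (Int.cast : ℤ → ZMod 2)).rank = (n + 1) / 2) :
    (Even n →
      {x : Fin n → ZMod 2 | (W.map (Int.cast : ℤ → ZMod 2))ᵀ.mulVec x = 0}
        = Set.range (W.map (Int.cast : ℤ → ZMod 2)).mulVec) ∧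
    (Odd n →
      {x : Fin n → ZMod 2 | (W.map (Int.cast : ℤ → ZMod 2))ᵀ.mulVec x = 0}
        = Set.range ((Matrix.of fun (i : Fin n) (j : Fin (n - 1)) =>
            (A ^ ((j : ℕ) + 1)).mulVec (fun _ => (1 : ℤ)) i).map
              (Int.cast : ℤ → ZMod 2)).mulVec) := by
  subst hW
  set Abar : Matrix (Fin n) (Fin n) (ZMod 2) := A.map (Int.cast : ℤ → ZMod 2) with hAbar
  set e : Fin n → ZMod 2 := fun _ => 1 with he
  -- cast of mulVec entries
  have hentrycast : ∀ (k : ℕ) (i : Fin n),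
      (((A ^ k *ᵥ fun _ => (1:ℤ)) i : ℤ) : ZMod 2) = ((Abar ^ k) *ᵥ e) i := by
    intro k i
    rw [hAbar, ← map_pow_int]
    simp [mulVec, dotProduct, Matrix.map_apply, he]
  have hB : (Matrix.of fun (i j : Fin n) => (A ^ (j : ℕ)).mulVec (fun _ => (1:ℤ)) i).map
      (Int.cast : ℤ → ZMod 2) = Matrix.of fun (i j : Fin n) => ((Abar ^ (j:ℕ)) *ᵥ e) i := by
    ext i j
    exact hentrycast j i
  have hB' : ((Matrix.of fun (i : Fin n) (j : Fin (n - 1)) =>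
      (A ^ ((j : ℕ) + 1)).mulVec (fun _ => (1 : ℤ)) i).map (Int.cast : ℤ → ZMod 2))
      = Matrix.of fun (i : Fin n) (j : Fin (n-1)) => ((Abar ^ ((j:ℕ)+1)) *ᵥ e) i := by
    ext i j
    exact hentrycast ((j:ℕ)+1) i
  rw [hB] at hrank ⊢
  rw [hB']
  set B : Matrix (Fin n) (Fin n) (ZMod 2) := Matrix.of fun (i j : Fin n) => ((Abar ^ (j:ℕ)) *ᵥ e) i with hBdef
  set B' : Matrix (Fin n) (Fin (n-1)) (ZMod 2) :=
    Matrix.of fun i j => ((Abar ^ ((j:ℕ)+1)) *ᵥ e) i with hB'def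
  -- symmetry facts
  have hAsym : Abarᵀ = Abar := by rw [hAbar, ← Matrix.transpose_map, hA_symm]
  have hAdiag : ∀ i, Abar i i = 0 := by intro i; simp [hAbar, Matrix.map_apply, hA_diag]
  have hpowsym : ∀ k : ℕ, (Abar ^ k)ᵀ = Abar ^ k := by
    intro k; rw [Matrix.transpose_pow, hAsym]
  set m : ℕ → ZMod 2 := fun k => e ⬝ᵥ ((Abar ^ k) *ᵥ e) with hm
  have hdot : ∀ j k : ℕ, ((Abar ^ j) *ᵥ e) ⬝ᵥ ((Abar ^ k) *ᵥ e) = m (j + k) := by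
    intro j k
    rw [symm_dot _ (hpowsym j), Matrix.mulVec_mulVec, ← pow_add, hm]
  have hm_double : ∀ k : ℕ, m (k + k) = m k := by
    intro k
    rw [← hdot k k]
    simp only [dotProduct, zmod2_mul_self, hm, he, one_mul]
  have hm_odd : ∀ k : ℕ, m (k + k + 1) = 0 := by
    intro k
    have hpow : Abar ^ (k + k + 1) = Abar ^ k * (Abar * Abar ^ k) := by
      rw [← pow_succ', ← pow_add]; ring_nf
    have : m (k + k + 1) = ((Abar ^ k) *ᵥ e) ⬝ᵥ (Abar *ᵥ ((Abar ^ k) *ᵥ e)) := by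
      rw [hm]
      simp only [hpow, ← Matrix.mulVec_mulVec]
      rw [← symm_dot _ (hpowsym k)]
    rw [this]
    exact alt_zero Abar hAsym hAdiag _
  have hm_pos : ∀ k : ℕ, 0 < k → m k = 0 := by
    intro k
    induction k using Nat.strong_induction_on with
    | _ k ih =>
      intro hk
      rcases Nat.even_or_odd k with ⟨j, hj⟩ | ⟨j, hj⟩
      · have hj0 : 0 < j := by omega
        subst hj
        rw [hm_double j]
        exact ih j (by omega) hj0
      · subst hj
        have : 2 * j + 1 = j + j + 1 := by omega
        rw [this]
        exact hm_odd j
  -- entries of Bᵀ * B and Bᵀ * B'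
  have hentry : ∀ j k : Fin n, (Bᵀ * B) j k = m ((j:ℕ) + (k:ℕ)) := by
    intro j k
    rw [← hdot]
    simp [Matrix.mul_apply, dotProduct, hBdef]
  have hentry' : ∀ (j : Fin n) (k : Fin (n-1)), (Bᵀ * B') j k = m ((j:ℕ) + ((k:ℕ)+1)) := by
    intro j k
    rw [← hdot]
    simp [Matrix.mul_apply, dotProduct, hBdef, hB'def]
  -- linear algebra setup
  have hrankB : Module.finrank (ZMod 2) (LinearMap.range B.mulVecLin) = (n+1)/2 := hrank
  have hrankBt : Module.finrank (ZMod 2) (LinearMap.range Bᵀ.mulVecLin) = (n+1)/2 := by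
    have := Matrix.rank_transpose B
    rw [Matrix.rank, Matrix.rank] at this
    rw [this, hrankB]
  have hrn := LinearMap.finrank_range_add_finrank_ker (Bᵀ.mulVecLin)
  rw [Module.finrank_pi, Fintype.card_fin, hrankBt] at hrn
  have hkerle : (n+1)/2 + Module.finrank (ZMod 2) (LinearMap.ker Bᵀ.mulVecLin) = n := hrn
  have hsetker : {x : Fin n → ZMod 2 | Bᵀ.mulVec x = 0}
      = ↑(LinearMap.ker Bᵀ.mulVecLin) := by
    ext x; simp [LinearMap.mem_ker, Matrix.mulVecLin_apply, Matrix.mulVec_transpose]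
  constructor
  · intro hev
    have hBtB : Bᵀ * B = 0 := by
      ext j k
      rw [hentry j k]
      rcases Nat.eq_zero_or_pos ((j:ℕ) + (k:ℕ)) with h0 | hpos
      · rw [h0]
        have : m 0 = ((n : ℕ) : ZMod 2) := by
          simp [hm, he, dotProduct]
        rw [this, Matrix.zero_apply, ZMod.natCast_eq_zero_iff]
        exact hev.two_dvd
      · rw [hm_pos _ hpos]; rfl
    have hsub : LinearMap.range B.mulVecLin ≤ LinearMap.ker Bᵀ.mulVecLin := by
      rintro x ⟨y, rfl⟩
      simp only [LinearMap.mem_ker, Matrix.mulVecLin_apply, Matrix.mulVec_mulVec, hBtB,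
        Matrix.zero_mulVec]
    have heq : LinearMap.range B.mulVecLin = LinearMap.ker Bᵀ.mulVecLin := by
      apply Submodule.eq_of_le_of_finrank_le hsub
      rw [hrankB]
      obtain ⟨t, rfl⟩ := hev
      omega
    have hsetrange : Set.range B.mulVec = ↑(LinearMap.range B.mulVecLin) := by
      ext x; simp [LinearMap.mem_range, Matrix.mulVecLin_apply]
    rw [hsetker, hsetrange, heq]
  · intro hodd
    have hBtB' : Bᵀ * B' = 0 := by
      ext j k
      rw [hentry' j k, hm_pos _ (by omega)]; rfl
    have hsub : LinearMap.range B'.mulVecLin ≤ LinearMap.ker Bᵀ.mulVecLin := by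
      rintro x ⟨y, rfl⟩
      simp only [LinearMap.mem_ker, Matrix.mulVecLin_apply, Matrix.mulVec_mulVec, hBtB',
        Matrix.zero_mulVec]
    -- rank B ≤ rank B' + 1
    have hcolsub : Set.range Bᵀ ⊆ insert (Bᵀ ⟨0, hn⟩) (Set.range B'ᵀ) := by
      rintro v ⟨j, rfl⟩
      rcases eq_or_ne j ⟨0, hn⟩ with rfl | hj
      · exact Set.mem_insert _ _
      · right
        have hj1 : 1 ≤ (j : ℕ) := by
          have : (j : ℕ) ≠ 0 := fun h => hj (Fin.ext h)
          omega
        refine ⟨⟨(j:ℕ) - 1, by omega⟩, ?_⟩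
        funext i
        simp only [Matrix.transpose_apply, hBdef, hB'def, Matrix.of_apply]
        congr 2
        omega
    have hspanle : LinearMap.range B.mulVecLin ≤
        (Submodule.span (ZMod 2) {Bᵀ ⟨0, hn⟩}) ⊔ LinearMap.range B'.mulVecLin := by
      rw [Matrix.range_mulVecLin, Matrix.range_mulVecLin B', ← Submodule.span_insert]
      exact Submodule.span_mono hcolsub
    have hfr1 : Module.finrank (ZMod 2) (Submodule.span (ZMod 2) {Bᵀ ⟨0, hn⟩} : Submodule (ZMod 2) (Fin n → ZMod 2)) ≤ 1 := by
      rcases eq_or_ne (Bᵀ ⟨0, hn⟩) 0 with h | h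
      · rw [h, Submodule.span_zero_singleton]
        simp
      · rw [finrank_span_singleton h]
    have hrankB' : (n+1)/2 ≤ Module.finrank (ZMod 2) (LinearMap.range B'.mulVecLin) + 1 := by
      calc (n+1)/2 = Module.finrank (ZMod 2) (LinearMap.range B.mulVecLin) := hrankB.symm
        _ ≤ Module.finrank (ZMod 2) ((Submodule.span (ZMod 2) {Bᵀ ⟨0, hn⟩}) ⊔ LinearMap.range B'.mulVecLin : Submodule (ZMod 2) (Fin n → ZMod 2)) := Submodule.finrank_mono hspanle
        _ ≤ Module.finrank (ZMod 2) (Submodule.span (ZMod 2) {Bᵀ ⟨0, hn⟩} : Submodule (ZMod 2) (Fin n → ZMod 2)) + Module.finrank (ZMod 2) (LinearMap.range B'.mulVecLin) := Submodule.finrank_add_le_finrank_add_finrank _ _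
        _ ≤ Module.finrank (ZMod 2) (LinearMap.range B'.mulVecLin) + 1 := by omega
    have heq : LinearMap.range B'.mulVecLin = LinearMap.ker Bᵀ.mulVecLin := by
      apply Submodule.eq_of_le_of_finrank_le hsub
      obtain ⟨t, rfl⟩ := hodd
      omega
    have hsetrange : Set.range B'.mulVec = ↑(LinearMap.range B'.mulVecLin) := by
      ext x; simp [LinearMap.mem_range, Matrix.mulVecLin_apply]
    rw [hsetker, hsetrange, heq]
end

section
/- Suppose n is even. Let W₁ be the n×n integer matrix with columns A^{2j} e for j = 0, 1, …, n−1, let W̃₁ be the n×(n/2) integer matrix with columns A^{2j} e for j = 0, 1, …, n/2 − 1, and let W̃ be the n×(n/2) integer matrix with columns A^{j} e for j = 0, 1, …, n/2 − 1 (the first n/2 columns of W). Then rank₂(W̃₁) = rank₂(W₁) and rank₂(W̃) = rank₂(W). -/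
open Matrix Submodule Module

/-!
Reduce mod 2 and write `M` for `A` over `𝔽₂`. Since `M` is symmetric with zero diagonal,
`xᵀ M x = 0` for every `x`, and `xᵀ x = eᵀ x` because `a² = a` in `𝔽₂`; together with `eᵀ e = n = 0`
this gives `eᵀ Mᵏ e = 0` for all `k` by induction on `k`. Hence the vectors `Mʲ e` are pairwise
orthogonal, their span is totally isotropic for the dot product, and `rank₂ W ≤ n / 2`. On the
other hand, the spans of the first `k` iterates `Mʲ e` grow strictly until they stabilise for
good, so a Krylov space of dimension `d` is spanned by its first `d` iterates. The same argument
applies to `M²`, whose Krylov matrix is `W₁`.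
-/

section Krylov

variable {K V : Type*} [DivisionRing K] [AddCommGroup V] [Module K V] (f : Module.End K V) (v : V)

def krylov (k : ℕ) : Submodule K V :=
  span K (Set.range fun i : Fin k => (f ^ (i : ℕ)) v)

instance (k : ℕ) : FiniteDimensional K (krylov f v k) :=
  FiniteDimensional.span_of_finite K (Set.finite_range _)

lemma pow_apply_mem_krylov {i k : ℕ} (h : i < k) : (f ^ i) v ∈ krylov f v k :=
  subset_span ⟨⟨i, h⟩, rfl⟩

lemma krylov_mono : Monotone (krylov f v) := fun _ _ hkm =>
  span_le.2 <| Set.range_subset_iff.2 fun i => pow_apply_mem_krylov f v (i.2.trans_le hkm)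

lemma map_krylov_le (k : ℕ) : (krylov f v k).map f ≤ krylov f v (k + 1) := by
  rw [krylov, map_span, span_le]
  rintro _ ⟨_, ⟨i, rfl⟩, rfl⟩
  rw [← Module.End.mul_apply, ← pow_succ']
  exact pow_apply_mem_krylov f v (Nat.succ_lt_succ i.2)

lemma pow_apply_mem_krylov_of_krylov_succ_eq {k : ℕ} (h : krylov f v (k + 1) = krylov f v k)
    (i : ℕ) : (f ^ i) v ∈ krylov f v k := by
  induction i with
  | zero =>
    exact h ▸ krylov_mono f v (Nat.succ_le_succ k.zero_le) (pow_apply_mem_krylov f v one_pos)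
  | succ i ih =>
    rw [pow_succ', Module.End.mul_apply, ← h]
    exact map_krylov_le f v k (mem_map_of_mem ih)

lemma krylov_eq_of_krylov_succ_eq {k m : ℕ} (h : krylov f v (k + 1) = krylov f v k)
    (hkm : k ≤ m) : krylov f v m = krylov f v k :=
  le_antisymm (span_le.2 <| Set.range_subset_iff.2 fun i =>
    pow_apply_mem_krylov_of_krylov_succ_eq f v h i) (krylov_mono f v hkm)

lemma le_finrank_krylov {k : ℕ} (h : ∀ j < k, krylov f v j ≠ krylov f v (j + 1)) :
    k ≤ finrank K (krylov f v k) := by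
  induction k with
  | zero => exact Nat.zero_le _
  | succ k ih =>
    have hlt : krylov f v k < krylov f v (k + 1) :=
      (krylov_mono f v k.le_succ).lt_of_ne (h k k.lt_succ_self)
    exact (ih fun j hj => h j (hj.trans k.lt_succ_self)).trans_lt (finrank_lt_finrank_of_lt hlt)

lemma krylov_eq_of_finrank_le {k m : ℕ} (hkm : k ≤ m) (hdim : finrank K (krylov f v m) ≤ k) :
    krylov f v k = krylov f v m := by
  by_cases hstat : ∃ j < k, krylov f v j = krylov f v (j + 1)
  · obtain ⟨j, hjk, hj⟩ := hstat
    rw [krylov_eq_of_krylov_succ_eq f v hj.symm hjk.le,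
      krylov_eq_of_krylov_succ_eq f v hj.symm (hjk.le.trans hkm)]
  · push Not at hstat
    exact eq_of_le_of_finrank_le (krylov_mono f v hkm)
      (hdim.trans (le_finrank_krylov f v hstat))

end Krylov

section Symmetric

variable {R ι : Type*} [CommRing R] [Fintype ι]

lemma dotProduct_mulVec_self_eq_zero [CharP R 2] {N : Matrix ι ι R} (hN : N.IsSymm)
    (hdiag : ∀ i, N i i = 0) (x : ι → R) : x ⬝ᵥ (N *ᵥ x) = 0 := by
  have hsum : x ⬝ᵥ (N *ᵥ x) = ∑ p : ι × ι, x p.1 * N p.1 p.2 * x p.2 := by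
    simp only [dotProduct, mulVec, Finset.mul_sum, Fintype.sum_prod_type, mul_assoc]
  -- the terms at `(i, j)` and `(j, i)` cancel, and the diagonal terms vanish
  rw [hsum]
  refine Finset.sum_involution (fun p _ => p.swap) (fun ⟨i, j⟩ _ => ?_)
    (fun ⟨i, j⟩ _ hne heq => ?_) (fun _ _ => Finset.mem_univ _) (fun _ _ => rfl)
  · change x i * N i j * x j + x j * N j i * x i = 0
    rw [hN.apply i j, show x j * N i j * x i = x i * N i j * x j by ring]
    exact CharTwo.add_self_eq_zero _
  · obtain rfl : j = i := congrArg Prod.fst heq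
    exact hne (by rw [hdiag, mul_zero, zero_mul])

variable [DecidableEq ι]

lemma Matrix.IsSymm.pow_mulVec_dotProduct {N : Matrix ι ι R} (hN : N.IsSymm) (i j : ℕ)
    (u : ι → R) :
    (N ^ i *ᵥ u) ⬝ᵥ (N ^ j *ᵥ u) = u ⬝ᵥ (N ^ (i + j) *ᵥ u) := by
  rw [dotProduct_comm, dotProduct_mulVec, ← (hN.pow i).eq, vecMul_transpose, dotProduct_comm,
    mulVec_mulVec, ← pow_add, add_comm]

end Symmetric

section KrylovMatrix

variable {K ι : Type*} [Field K] [Fintype ι] [DecidableEq ι]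

def krylovMatrix (N : Matrix ι ι K) (u : ι → K) (m : ℕ) : Matrix ι (Fin m) K :=
  of fun i j => (N ^ (j : ℕ) *ᵥ u) i

lemma rank_krylovMatrix (N : Matrix ι ι K) (u : ι → K) (m : ℕ) :
    (krylovMatrix N u m).rank = finrank K (krylov (toLin' N) u m) := by
  have hcols : (krylovMatrix N u m).col = fun j : Fin m => (toLin' N ^ (j : ℕ)) u := by
    ext j i
    simp [krylovMatrix, ← toLin'_pow]
  rw [rank_eq_finrank_span_cols, hcols, krylov]

lemma transpose_krylovMatrix_mul_self {N : Matrix ι ι K} (hN : N.IsSymm) {u : ι → K}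
    (hu : ∀ k, u ⬝ᵥ (N ^ k *ᵥ u) = 0) (m : ℕ) :
    (krylovMatrix N u m)ᵀ * krylovMatrix N u m = 0 := by
  ext i j
  rw [mul_apply, Matrix.zero_apply, ← hu (i + j), ← hN.pow_mulVec_dotProduct]
  rfl

lemma rank_krylovMatrix_eq {N : Matrix ι ι K} (hN : N.IsSymm) {u : ι → K}
    (hu : ∀ k, u ⬝ᵥ (N ^ k *ᵥ u) = 0) {k m : ℕ} (hk : Fintype.card ι ≤ 2 * k) (hkm : k ≤ m) :
    (krylovMatrix N u k).rank = (krylovMatrix N u m).rank := by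
  have hiso := rank_add_rank_le_card_of_mul_eq_zero (transpose_krylovMatrix_mul_self hN hu m)
  rw [rank_transpose, rank_krylovMatrix] at hiso
  rw [rank_krylovMatrix, rank_krylovMatrix, krylov_eq_of_finrank_le _ _ hkm (by omega)]

end KrylovMatrix

lemma ZMod.dotProduct_self_eq_one_dotProduct {ι : Type*} [Fintype ι] (x : ι → ZMod 2) :
    x ⬝ᵥ x = 1 ⬝ᵥ x := by
  have hidem : ∀ a : ZMod 2, a * a = a := by decide
  simp only [dotProduct, hidem, Pi.one_apply, one_mul]

lemma ZMod.one_dotProduct_pow_mulVec_one_eq_zero {ι : Type*} [Fintype ι] [DecidableEq ι]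
    {N : Matrix ι ι (ZMod 2)} (hι : Even (Fintype.card ι)) (hN : N.IsSymm)
    (hdiag : ∀ i, N i i = 0) (k : ℕ) : (1 : ι → ZMod 2) ⬝ᵥ (N ^ k *ᵥ 1) = 0 := by
  induction k using Nat.strong_induction_on with
  | _ k ih =>
  obtain ⟨m, rfl | rfl⟩ := Nat.even_or_odd' k
  · rcases m.eq_zero_or_pos with rfl | hm
    · simpa [one_dotProduct_one] using hι.natCast_zmod_two
    · rw [two_mul, ← hN.pow_mulVec_dotProduct, ZMod.dotProduct_self_eq_one_dotProduct]
      exact ih m (by omega)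
  · rw [show 2 * m + 1 = m + (1 + m) by ring, ← hN.pow_mulVec_dotProduct, pow_add, pow_one,
      ← mulVec_mulVec]
    exact dotProduct_mulVec_self_eq_zero hN hdiag _

lemma map_intCast_of_pow_mulVec_one {R ι κ : Type*} [Ring R] [Fintype ι] [DecidableEq ι]
    (A : Matrix ι ι ℤ) (g : κ → ℕ) :
    (of fun i j => (A ^ g j *ᵥ fun _ => (1 : ℤ)) i).map (Int.cast : ℤ → R) =
      of fun i j => ((A.map (Int.cast : ℤ → R)) ^ g j *ᵥ 1) i := by
  ext i j
  have hpow : (A ^ g j).map (Int.cast : ℤ → R) = A.map Int.cast ^ g j :=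
    map_pow (Int.castRingHom R).mapMatrix A (g j)
  have := RingHom.map_mulVec (Int.castRingHom R) (A ^ g j) (fun _ => 1) i
  simp_all [Function.comp_def, Pi.one_def]

theorem stmt_13_general (n : ℕ) (hn_even : Even n)
    (A : Matrix (Fin n) (Fin n) ℤ)
    (hA_symm : Aᵀ = A)
    (hA_diag : ∀ i, A i i = 0)
    (W : Matrix (Fin n) (Fin n) ℤ)
    (hW : W = Matrix.of fun (i j : Fin n) => (A ^ (j : ℕ)).mulVec (fun _ => (1 : ℤ)) i)
    (W₁ : Matrix (Fin n) (Fin n) ℤ)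
    (hW₁ : W₁ = Matrix.of fun (i j : Fin n) =>
      (A ^ (2 * (j : ℕ))).mulVec (fun _ => (1 : ℤ)) i)
    (Wt₁ : Matrix (Fin n) (Fin (n / 2)) ℤ)
    (hWt₁ : Wt₁ = Matrix.of fun (i : Fin n) (j : Fin (n / 2)) =>
      (A ^ (2 * (j : ℕ))).mulVec (fun _ => (1 : ℤ)) i)
    (Wt : Matrix (Fin n) (Fin (n / 2)) ℤ)
    (hWt : Wt = Matrix.of fun (i : Fin n) (j : Fin (n / 2)) =>
      (A ^ (j : ℕ)).mulVec (fun _ => (1 : ℤ)) i) :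
    (Wt₁.map (Int.cast : ℤ → ZMod 2)).rank = (W₁.map (Int.cast : ℤ → ZMod 2)).rank ∧
    (Wt.map (Int.cast : ℤ → ZMod 2)).rank = (W.map (Int.cast : ℤ → ZMod 2)).rank := by
  set M := A.map (Int.cast : ℤ → ZMod 2)
  have hM : M.IsSymm := IsSymm.map hA_symm _
  have hMdiag : ∀ i, M i i = 0 := fun i => by simp [M, hA_diag i]
  have hmoments : ∀ k, (1 : Fin n → ZMod 2) ⬝ᵥ (M ^ k *ᵥ 1) = 0 :=
    ZMod.one_dotProduct_pow_mulVec_one_eq_zero (by simpa using hn_even) hM hMdiag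
  have hmoments₂ : ∀ k, (1 : Fin n → ZMod 2) ⬝ᵥ ((M ^ 2) ^ k *ᵥ 1) = 0 := fun k => by
    rw [← pow_mul]
    exact hmoments _
  have hhalf : Fintype.card (Fin n) ≤ 2 * (n / 2) := by
    rw [Fintype.card_fin, Nat.two_mul_div_two_of_even hn_even]
  subst hW hW₁ hWt₁ hWt
  simp only [map_intCast_of_pow_mulVec_one]
  simp only [pow_mul]
  exact ⟨rank_krylovMatrix_eq (hM.pow 2) hmoments₂ hhalf (Nat.div_le_self n 2),
    rank_krylovMatrix_eq hM hmoments hhalf (Nat.div_le_self n 2)⟩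

/-- For `n` even, `rank₂(Wt₁) = rank₂(W₁)` and `rank₂(Wt) = rank₂(W)`,
where `W₁ = [e, A²e, …, A^{2n-2}e]`, `Wt₁ = [e, A²e, …, A^{n-2}e]` and
`Wt = [e, Ae, …, A^{n/2-1}e]`. -/
theorem stmt_13 (n : ℕ) (hn : 0 < n) (hn_even : Even n)
    (A : Matrix (Fin n) (Fin n) ℤ)
    (hA_symm : Aᵀ = A)
    (hA_diag : ∀ i, A i i = 0)
    (hA_01 : ∀ i j, A i j = 0 ∨ A i j = 1)
    (W : Matrix (Fin n) (Fin n) ℤ)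
    (hW : W = Matrix.of fun (i j : Fin n) => (A ^ (j : ℕ)).mulVec (fun _ => (1 : ℤ)) i)
    (W₁ : Matrix (Fin n) (Fin n) ℤ)
    (hW₁ : W₁ = Matrix.of fun (i j : Fin n) =>
      (A ^ (2 * (j : ℕ))).mulVec (fun _ => (1 : ℤ)) i)
    (Wt₁ : Matrix (Fin n) (Fin (n / 2)) ℤ)
    (hWt₁ : Wt₁ = Matrix.of fun (i : Fin n) (j : Fin (n / 2)) =>
      (A ^ (2 * (j : ℕ))).mulVec (fun _ => (1 : ℤ)) i)
    (Wt : Matrix (Fin n) (Fin (n / 2)) ℤ)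
    (hWt : Wt = Matrix.of fun (i : Fin n) (j : Fin (n / 2)) =>
      (A ^ (j : ℕ)).mulVec (fun _ => (1 : ℤ)) i) :
    (Wt₁.map (Int.cast : ℤ → ZMod 2)).rank = (W₁.map (Int.cast : ℤ → ZMod 2)).rank ∧
    (Wt.map (Int.cast : ℤ → ZMod 2)).rank = (W.map (Int.cast : ℤ → ZMod 2)).rank :=
  stmt_13_general n hn_even A hA_symm hA_diag W hW W₁ hW₁ Wt₁ hWt₁ Wt hWt
end

section
/- Suppose G belongs to the family F_n and set k = ⌈n/2⌉. Let W̃₁ be the integer matrix whose columns are A^{2j} e for j = 0, 1, …, k−1 if n is even, and A^{2j} e for j = 1, 2, …, k−1 if n is odd. Then every entry of Wᵀ W̃₁ is even, and the integer matrix (Wᵀ W̃₁)/2 has rank over 𝔽₂ equal to its number of columns, namely k if n is even and k−1 if n is odd. -/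
open Matrix

section stmt14aux

variable {n : ℕ}

lemma stmt14_dot_symm {R : Type*} [CommRing R] {B : Matrix (Fin n) (Fin n) R} (h : Bᵀ = B)
    (x y : Fin n → R) : x ⬝ᵥ (B *ᵥ y) = (B *ᵥ x) ⬝ᵥ y := by
  rw [Matrix.dotProduct_mulVec, ← Matrix.mulVec_transpose, h]

lemma stmt14_pow_dot {R : Type*} [CommRing R] {B : Matrix (Fin n) (Fin n) R} (h : Bᵀ = B)
    (v : Fin n → R) : ∀ p q : ℕ, (B ^ p *ᵥ v) ⬝ᵥ (B ^ q *ᵥ v) = v ⬝ᵥ (B ^ (p + q) *ᵥ v) := by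
  intro p
  induction p with
  | zero => intro q; simp
  | succ p ih =>
    intro q
    have h1 : B ^ (p + 1) *ᵥ v = B *ᵥ (B ^ p *ᵥ v) := by
      rw [Matrix.mulVec_mulVec, ← pow_succ']
    have h2 : B *ᵥ (B ^ q *ᵥ v) = B ^ (q + 1) *ᵥ v := by
      rw [Matrix.mulVec_mulVec, ← pow_succ']
    have h3 : p + (q + 1) = p + 1 + q := by omega
    rw [h1, ← stmt14_dot_symm h, h2, ih (q + 1), h3]

lemma stmt14_self_dot {B : Matrix (Fin n) (Fin n) (ZMod 2)} (hs : Bᵀ = B)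
    (hd : ∀ i, B i i = 0) (x : Fin n → ZMod 2) : x ⬝ᵥ (B *ᵥ x) = 0 := by
  have hrw : x ⬝ᵥ (B *ᵥ x) =
      ∑ p ∈ Finset.univ ×ˢ Finset.univ, x p.1 * (B p.1 p.2 * x p.2) := by
    rw [Finset.sum_product]
    simp [dotProduct, Matrix.mulVec, Finset.mul_sum]
  rw [hrw]
  apply Finset.sum_involution (fun p _ => p.swap)
  · intro p _
    have hBs : B p.2 p.1 = B p.1 p.2 := by
      conv_lhs => rw [← hs]
      rfl
    show x p.1 * (B p.1 p.2 * x p.2) + x p.2 * (B p.2 p.1 * x p.1) = 0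
    rw [hBs]
    have heq : x p.2 * (B p.1 p.2 * x p.1) = x p.1 * (B p.1 p.2 * x p.2) := by ring
    rw [heq]
    exact CharTwo.add_self_eq_zero _
  · intro p _ hne hc
    apply hne
    have h12 : p.2 = p.1 := congrArg Prod.fst hc
    rw [h12, hd]
    ring
  · intro p _; exact Prod.swap_swap p
  · intro p _; exact Finset.mem_univ _

lemma stmt14_parity {B : Matrix (Fin n) (Fin n) (ZMod 2)} (hs : Bᵀ = B) (hd : ∀ i, B i i = 0) :
    ∀ m : ℕ, 1 ≤ m → (fun _ => (1 : ZMod 2)) ⬝ᵥ (B ^ m *ᵥ fun _ => 1) = 0 := by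
  have hsq : ∀ a : ZMod 2, a * a = a := by decide
  intro m
  induction m using Nat.strong_induction_on with
  | _ m ih =>
    intro hm
    rcases Nat.even_or_odd m with ⟨s, hm2⟩ | ⟨s, hm2⟩
    · subst hm2
      have h1 : 1 ≤ s := by omega
      rw [← stmt14_pow_dot hs (fun _ => (1 : ZMod 2)) s s]
      have hx : ∀ y : Fin n → ZMod 2,
          y ⬝ᵥ y = (fun _ => (1 : ZMod 2)) ⬝ᵥ y := by
        intro y; simp [dotProduct, hsq]
      rw [hx]
      exact ih s (by omega) h1
    · subst hm2
      have h3 : s + (s + 1) = 2 * s + 1 := by omega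
      rw [← h3, ← stmt14_pow_dot hs (fun _ => (1 : ZMod 2)) s (s + 1)]
      have h2 : B ^ (s + 1) *ᵥ (fun _ => (1 : ZMod 2)) = B *ᵥ (B ^ s *ᵥ fun _ => 1) := by
        rw [Matrix.mulVec_mulVec, ← pow_succ']
      rw [h2]
      exact stmt14_self_dot hs hd _

lemma stmt14_rank {n m : ℕ} (M : Matrix (Fin n) (Fin n) (ZMod 2)) (hdet : IsUnit M.det)
    (g : Fin m → Fin n) (hg : Function.Injective g) :
    (M.submatrix id g).rank = m := by
  set P : Matrix (Fin n) (Fin m) (ZMod 2) :=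
    Matrix.of fun c j => if g j = c then 1 else 0 with hPdef
  have hP : M.submatrix id g = M * P := by
    ext i j
    simp [Matrix.mul_apply, hPdef]
  have hMinj : Function.Injective M.mulVec :=
    Matrix.mulVec_injective_iff_isUnit.mpr ((Matrix.isUnit_iff_isUnit_det M).mpr hdet)
  have hker : ∀ v, (M.submatrix id g) *ᵥ v = 0 → v = 0 := by
    intro v hv
    rw [hP, ← Matrix.mulVec_mulVec] at hv
    have h0 : P *ᵥ v = 0 := hMinj (by rw [hv, Matrix.mulVec_zero])
    funext j
    have h3 := congrFun h0 (g j)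
    simpa [Matrix.mulVec, dotProduct, hPdef, hg.eq_iff] using h3
  have hinj : Function.Injective (M.submatrix id g).mulVecLin := by
    rw [← LinearMap.ker_eq_bot]
    apply (Submodule.eq_bot_iff _).mpr
    intro v hv
    exact hker v (by simpa [Matrix.mulVecLin_apply] using hv)
  show Module.finrank (ZMod 2) (LinearMap.range (M.submatrix id g).mulVecLin) = m
  rw [LinearMap.finrank_range_of_inj hinj, Module.finrank_fin_fun]

lemma stmt14_map_pow (A : Matrix (Fin n) (Fin n) ℤ) (m : ℕ) :
    (A ^ m).map (Int.cast : ℤ → ZMod 2) = (A.map (Int.cast : ℤ → ZMod 2)) ^ m := by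
  have h := map_pow ((Int.castRingHom (ZMod 2)).mapMatrix) A m
  simpa [RingHom.mapMatrix_apply] using h

lemma stmt14_cast_dot (A : Matrix (Fin n) (Fin n) ℤ) (m : ℕ) :
    (((fun _ => (1:ℤ)) ⬝ᵥ (A ^ m *ᵥ fun _ => (1:ℤ)) : ℤ) : ZMod 2)
      = (fun _ => (1 : ZMod 2)) ⬝ᵥ ((A.map (Int.cast : ℤ → ZMod 2)) ^ m *ᵥ fun _ => 1) := by
  rw [← stmt14_map_pow]
  simp [dotProduct, Matrix.mulVec, Matrix.map_apply]

lemma stmt14_entry (A W : Matrix (Fin n) (Fin n) ℤ) (hA : Aᵀ = A)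
    (hW : W = Matrix.of fun (i j : Fin n) => (A ^ (j : ℕ)).mulVec (fun _ => (1 : ℤ)) i)
    {m : ℕ} (Wt : Matrix (Fin n) (Fin m) ℤ) (c : Fin m → ℕ)
    (hWt : ∀ x j, Wt x j = (A ^ (c j)).mulVec (fun _ => 1) x)
    (i : Fin n) (j : Fin m) :
    (Wᵀ * Wt) i j = (fun _ => (1:ℤ)) ⬝ᵥ (A ^ ((i:ℕ) + c j) *ᵥ fun _ => 1) := by
  have h1 : (Wᵀ * Wt) i j = (A ^ (i:ℕ) *ᵥ fun _ => (1:ℤ)) ⬝ᵥ (A ^ (c j) *ᵥ fun _ => 1) := by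
    subst hW
    simp [Matrix.mul_apply, dotProduct, hWt]
  rw [h1, stmt14_pow_dot hA]

end stmt14aux

/-- For `G ∈ F_n`, the matrix `WᵀW̃₁` has all entries even and
`(WᵀW̃₁)/2` has full column rank over `𝔽₂` (`k = ⌈n/2⌉` columns for `n` even,
`k-1` columns for `n` odd). -/
theorem stmt_14 (n : ℕ) (hn : 0 < n)
    (A : Matrix (Fin n) (Fin n) ℤ)
    (hA_symm : Aᵀ = A)
    (hA_diag : ∀ i, A i i = 0)
    (hA_01 : ∀ i j, A i j = 0 ∨ A i j = 1)
    (W : Matrix (Fin n) (Fin n) ℤ)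
    (hW : W = Matrix.of fun (i j : Fin n) => (A ^ (j : ℕ)).mulVec (fun _ => (1 : ℤ)) i)
    (hF : ∃ ε b : ℤ, (ε = 1 ∨ ε = -1) ∧ Odd b ∧ Squarefree b ∧
      W.det = ε * 2 ^ (n / 2) * b)
    (k : ℕ) (hk : k = (n + 1) / 2) :
    (Even n → ∀ Wt₁ : Matrix (Fin n) (Fin k) ℤ,
      Wt₁ = Matrix.of (fun (i : Fin n) (j : Fin k) =>
        (A ^ (2 * (j : ℕ))).mulVec (fun _ => (1 : ℤ)) i) →
      (∀ i j, Even ((Wᵀ * Wt₁) i j)) ∧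
      ((Matrix.of fun (i : Fin n) (j : Fin k) => (Wᵀ * Wt₁) i j / 2).map
        (Int.cast : ℤ → ZMod 2)).rank = k) ∧
    (Odd n → ∀ Wt₁ : Matrix (Fin n) (Fin (k - 1)) ℤ,
      Wt₁ = Matrix.of (fun (i : Fin n) (j : Fin (k - 1)) =>
        (A ^ (2 * ((j : ℕ) + 1))).mulVec (fun _ => (1 : ℤ)) i) →
      (∀ i j, Even ((Wᵀ * Wt₁) i j)) ∧
      ((Matrix.of fun (i : Fin n) (j : Fin (k - 1)) => (Wᵀ * Wt₁) i j / 2).map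
        (Int.cast : ℤ → ZMod 2)).rank = k - 1) := by
  obtain ⟨ε, b, hε, hb, hsf, hdetW⟩ := hF
  set B := A.map (Int.cast : ℤ → ZMod 2) with hB
  have hBs : Bᵀ = B := by rw [hB, ← Matrix.transpose_map, hA_symm]
  have hBd : ∀ i, B i i = 0 := fun i => by simp [hB, Matrix.map_apply, hA_diag]
  -- evenness of the basic dot products
  have heven : ∀ m : ℕ, (1 ≤ m ∨ Even n) →
      Even ((fun _ => (1:ℤ)) ⬝ᵥ (A ^ m *ᵥ fun _ => (1:ℤ))) := by
    intro m hm
    rw [even_iff_two_dvd]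
    have h2 : (((fun _ => (1:ℤ)) ⬝ᵥ (A ^ m *ᵥ fun _ => (1:ℤ)) : ℤ) : ZMod 2) = 0 := by
      rw [stmt14_cast_dot, ← hB]
      rcases Nat.eq_zero_or_pos m with h0 | h0
      · subst h0
        rcases hm with h1 | h1
        · omega
        · have hcard : (fun _ => (1 : ZMod 2)) ⬝ᵥ ((B ^ 0) *ᵥ fun _ => 1) = (n : ZMod 2) := by
            simp [dotProduct]
          rw [hcard]
          exact (ZMod.natCast_eq_zero_iff n 2).mpr h1.two_dvd
      · exact stmt14_parity hBs hBd m h0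
    have hdvd := (ZMod.intCast_zmod_eq_zero_iff_dvd _ 2).mp h2
    simpa using hdvd
  -- entries of WᵀW
  have hWW : ∀ i j : Fin n, (Wᵀ * W) i j
      = (fun _ => (1:ℤ)) ⬝ᵥ (A ^ ((i:ℕ) + (j:ℕ)) *ᵥ fun _ => 1) :=
    fun i j => stmt14_entry A W hA_symm hW W (fun j => (j:ℕ)) (fun x j => by rw [hW]; rfl) i j
  -- determinant of WᵀW
  have hdetWW : (Wᵀ * W).det = 2 ^ (2 * (n / 2)) * b ^ 2 := by
    rw [Matrix.det_mul, Matrix.det_transpose, hdetW]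
    rcases hε with h | h <;> subst h <;> ring
  have hbcast : ((b : ℤ) : ZMod 2) = 1 := by
    obtain ⟨b2, hb2⟩ := hb
    subst hb2
    push_cast
    rw [(by decide : (2 : ZMod 2) = 0)]
    ring
  constructor
  · -- n even
    intro hEvenN Wt₁ hWt₁
    obtain ⟨t, ht⟩ := hEvenN
    have hWWt : ∀ (i : Fin n) (j : Fin k), (Wᵀ * Wt₁) i j
        = (fun _ => (1:ℤ)) ⬝ᵥ (A ^ ((i:ℕ) + 2 * (j:ℕ)) *ᵥ fun _ => 1) :=
      fun i j => stmt14_entry A W hA_symm hW Wt₁ (fun j => 2 * (j:ℕ))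
        (fun x j => by rw [hWt₁]; rfl) i j
    refine ⟨fun i j => by rw [hWWt]; exact heven _ (Or.inr ⟨t, ht⟩), ?_⟩
    -- rank part
    have hevenWW : ∀ i j : Fin n, Even ((Wᵀ * W) i j) := by
      intro i j; rw [hWW]; exact heven _ (Or.inr ⟨t, ht⟩)
    set M2 : Matrix (Fin n) (Fin n) ℤ := Matrix.of fun i j => (Wᵀ * W) i j / 2 with hM2
    have hfact : Wᵀ * W = M2 * Matrix.diagonal (fun _ => (2:ℤ)) := by
      ext i j
      rw [Matrix.mul_diagonal]
      exact (Int.ediv_mul_cancel ((even_iff_two_dvd).mp (hevenWW i j))).symm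
    have hdet2 : M2.det * 2 ^ n = 2 ^ (2 * (n / 2)) * b ^ 2 := by
      rw [← hdetWW, hfact, Matrix.det_mul, Matrix.det_diagonal, Finset.prod_const,
        Finset.card_univ, Fintype.card_fin]
    have hdetM2 : M2.det = b ^ 2 := by
      have h2n : (2:ℤ) ^ n ≠ 0 := by positivity
      have hnn : 2 * (n / 2) = n := by omega
      rw [hnn] at hdet2
      have : M2.det * 2 ^ n = b ^ 2 * 2 ^ n := by rw [hdet2]; ring
      exact mul_right_cancel₀ h2n this
    have hunit : IsUnit ((M2.map (Int.cast : ℤ → ZMod 2)).det) := by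
      have hmap := (Int.castRingHom (ZMod 2)).map_det M2
      rw [RingHom.mapMatrix_apply] at hmap
      have : (M2.map (Int.cast : ℤ → ZMod 2)).det = ((M2.det : ℤ) : ZMod 2) := by
        exact hmap.symm
      rw [this, hdetM2]
      push_cast
      rw [hbcast]
      simp
    have hg : Function.Injective (fun j : Fin k => (⟨2 * (j:ℕ), by
        have := j.isLt; omega⟩ : Fin n)) := by
      intro a c hac
      have h1 : 2 * (a:ℕ) = 2 * (c:ℕ) := congrArg Fin.val hac
      exact Fin.ext (by omega)
    have hNsub : (Matrix.of fun (i : Fin n) (j : Fin k) => (Wᵀ * Wt₁) i j / 2).map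
        (Int.cast : ℤ → ZMod 2)
        = (M2.map (Int.cast : ℤ → ZMod 2)).submatrix id (fun j : Fin k => (⟨2 * (j:ℕ), by
        have := j.isLt; omega⟩ : Fin n)) := by
      ext i j
      simp only [Matrix.map_apply, Matrix.of_apply, Matrix.submatrix_apply, id_eq, hM2]
      congr 2
      rw [hWWt, hWW]
    rw [hNsub]
    exact stmt14_rank _ hunit _ hg
  · -- n odd
    intro hOddN Wt₁ hWt₁
    obtain ⟨t, ht⟩ := hOddN
    have hWWt : ∀ (i : Fin n) (j : Fin (k - 1)), (Wᵀ * Wt₁) i j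
        = (fun _ => (1:ℤ)) ⬝ᵥ (A ^ ((i:ℕ) + 2 * ((j:ℕ) + 1)) *ᵥ fun _ => 1) :=
      fun i j => stmt14_entry A W hA_symm hW Wt₁ (fun j => 2 * ((j:ℕ) + 1))
        (fun x j => by rw [hWt₁]; rfl) i j
    refine ⟨fun i j => by rw [hWWt]; exact heven _ (Or.inl (by omega)), ?_⟩
    -- rank part
    have hevenWW : ∀ i j : Fin n, (j:ℕ) ≠ 0 → Even ((Wᵀ * W) i j) := by
      intro i j hj; rw [hWW]; exact heven _ (Or.inl (by omega))
    set d : Fin n → ℤ := fun j => if (j:ℕ) = 0 then 1 else 2 with hd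
    set M2 : Matrix (Fin n) (Fin n) ℤ :=
      Matrix.of fun i j => if (j:ℕ) = 0 then (Wᵀ * W) i j else (Wᵀ * W) i j / 2 with hM2
    have hfact : Wᵀ * W = M2 * Matrix.diagonal d := by
      ext i j
      rw [Matrix.mul_diagonal]
      simp only [hM2, hd, Matrix.of_apply]
      by_cases hj : (j:ℕ) = 0
      · rw [if_pos hj, if_pos hj, mul_one]
      · rw [if_neg hj, if_neg hj]
        exact (Int.ediv_mul_cancel ((even_iff_two_dvd).mp (hevenWW i j hj))).symm
    have hdetdiag : (Matrix.diagonal d).det = 2 ^ (n - 1) := by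
      rw [Matrix.det_diagonal,
        ← Finset.mul_prod_erase Finset.univ d (Finset.mem_univ (⟨0, hn⟩ : Fin n))]
      have h0 : d (⟨0, hn⟩ : Fin n) = 1 := by simp [hd]
      have hrest : ∀ j ∈ Finset.univ.erase (⟨0, hn⟩ : Fin n), d j = 2 := by
        intro j hj
        have hne := Finset.ne_of_mem_erase hj
        have hval : (j:ℕ) ≠ 0 := by
          intro hc
          exact hne (Fin.ext hc)
        simp [hd, hval]
      rw [h0, one_mul, Finset.prod_congr rfl hrest, Finset.prod_const,
        Finset.card_erase_of_mem (Finset.mem_univ _), Finset.card_univ, Fintype.card_fin]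
    have hdet2 : M2.det * 2 ^ (n - 1) = 2 ^ (2 * (n / 2)) * b ^ 2 := by
      rw [← hdetWW, hfact, Matrix.det_mul, hdetdiag]
    have hdetM2 : M2.det = b ^ 2 := by
      have h2n : (2:ℤ) ^ (n - 1) ≠ 0 := by positivity
      have hnn : 2 * (n / 2) = n - 1 := by omega
      rw [hnn] at hdet2
      have : M2.det * 2 ^ (n - 1) = b ^ 2 * 2 ^ (n - 1) := by rw [hdet2]; ring
      exact mul_right_cancel₀ h2n this
    have hunit : IsUnit ((M2.map (Int.cast : ℤ → ZMod 2)).det) := by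
      have hmap := (Int.castRingHom (ZMod 2)).map_det M2
      rw [RingHom.mapMatrix_apply] at hmap
      have : (M2.map (Int.cast : ℤ → ZMod 2)).det = ((M2.det : ℤ) : ZMod 2) := by
        exact hmap.symm
      rw [this, hdetM2]
      push_cast
      rw [hbcast]
      simp
    have hg : Function.Injective (fun j : Fin (k - 1) => (⟨2 * ((j:ℕ) + 1), by
        have := j.isLt; omega⟩ : Fin n)) := by
      intro a c hac
      have h1 : 2 * ((a:ℕ) + 1) = 2 * ((c:ℕ) + 1) := congrArg Fin.val hac
      exact Fin.ext (by omega)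
    have hNsub : (Matrix.of fun (i : Fin n) (j : Fin (k - 1)) => (Wᵀ * Wt₁) i j / 2).map
        (Int.cast : ℤ → ZMod 2)
        = (M2.map (Int.cast : ℤ → ZMod 2)).submatrix id
          (fun j : Fin (k - 1) => (⟨2 * ((j:ℕ) + 1), by
            have := j.isLt; omega⟩ : Fin n)) := by
      ext i j
      simp only [Matrix.map_apply, Matrix.of_apply, Matrix.submatrix_apply, id_eq, hM2]
      rw [if_neg (by omega : ¬ (2 * ((j:ℕ) + 1) = 0))]
      congr 2
      rw [hWWt, hWW]
    rw [hNsub]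
    exact stmt14_rank _ hunit _ hg
end

section
/- Suppose det(W) ≠ 0 and rank₂(W) = ⌈n/2⌉. Let W₁ be the n×n integer matrix with columns A^{2j} e for j = 0, 1, …, n−1. Assume that every entry of Wᵀ W₁ is even, and that every vector x ∈ 𝔽₂ⁿ satisfying ((Wᵀ W₁)/2 reduced mod 2) · x = 0 also satisfies (W reduced mod 2) · x = 0. If Q belongs to Q_G and has level ℓ, then ℓ is odd. -/
/-!
Suppose the level `ℓ` of `Q` is even. Then `M = ℓQ` is integral with a column `u` that is not
zero mod 2 (by minimality of `ℓ`), and `B = QᵀAQ` is integral. All walk counts `eᵀAᵗe` are even: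
`eᵀe = n` is an entry of `WᵀW₁`, and the quadratic form of a symmetric integer matrix is
congruent mod 2 to its diagonal part. So `WᵀW ≡ 0 (mod 2)`, and as `rank₂ W = n/2` the range of
`W` mod 2 is the kernel of `Wᵀ` mod 2. Since `MᵀW = ℓ W_B ≡ 0`, we get `u ≡ Wc (mod 2)` for an
integral `c`. The matrix `WᵀAᵗW` has even walk counts as entries, so its quadratic form is
congruent mod 4 to its diagonal part, which gives
`(WᵀW₁c)_t ≡ (Wc)ᵀAᵗ(Wc) ≡ uᵀAᵗu = ℓ²(Bᵗ)_{jj} ≡ 0 (mod 4)`.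
Hence `(WᵀW₁/2) c ≡ 0 (mod 2)`, so `Wc ≡ 0` by hypothesis, contradicting `u ≢ 0`.
-/

open Matrix

namespace Matrix

variable {ι : Type*}

section QuadraticForm

variable [LinearOrder ι]

def strictUpper {R : Type*} [Zero R] (S : Matrix ι ι R) : Matrix ι ι R :=
  of fun i j => if i < j then S i j else 0

lemma IsSymm.eq_diagonal_add_strictUpper_add_transpose {R : Type*} [AddZeroClass R]
    {S : Matrix ι ι R} (hS : S.IsSymm) :
    S = diagonal S.diag + S.strictUpper + S.strictUpperᵀ := by
  ext i j
  simp only [add_apply, diagonal_apply, diag_apply, transpose_apply, strictUpper, of_apply]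
  rcases lt_trichotomy i j with h | rfl | h
  · simp [h, h.ne, h.not_gt]
  · simp
  · simp [h, h.ne', h.not_gt, hS.apply]

variable [Fintype ι]

lemma IsSymm.dotProduct_mulVec_self {R : Type*} [CommRing R] {S : Matrix ι ι R}
    (hS : S.IsSymm) (v : ι → R) :
    v ⬝ᵥ S *ᵥ v = ∑ i, S i i * v i ^ 2 + 2 * (v ⬝ᵥ S.strictUpper *ᵥ v) := by
  conv_lhs => rw [hS.eq_diagonal_add_strictUpper_add_transpose]
  have hT : v ⬝ᵥ S.strictUpperᵀ *ᵥ v = v ⬝ᵥ S.strictUpper *ᵥ v := by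
    rw [dotProduct_mulVec, vecMul_transpose, dotProduct_comm]
  rw [add_mulVec, add_mulVec, dotProduct_add, dotProduct_add, hT, two_mul, ← add_assoc]
  congr 2
  simp only [mulVec_diagonal, dotProduct, diag_apply]
  exact Finset.sum_congr rfl fun i _ => by ring

lemma IsSymm.dotProduct_mulVec_self_modEq_two {S : Matrix ι ι ℤ} (hS : S.IsSymm) (v : ι → ℤ) :
    v ⬝ᵥ S *ᵥ v ≡ ∑ i, S i i * v i [ZMOD 2] := by
  rw [hS.dotProduct_mulVec_self]
  refine (Int.modEq_iff_dvd.mpr ?_).symm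
  rw [add_sub_right_comm, ← Finset.sum_sub_distrib]
  refine dvd_add (Finset.dvd_sum fun i _ => ?_) (dvd_mul_right 2 _)
  rw [← mul_sub, sq, ← mul_sub_one]
  exact dvd_mul_of_dvd_right (even_iff_two_dvd.mp (Int.even_mul_pred_self _)) _

lemma IsSymm.dotProduct_mulVec_self_modEq_four {S : Matrix ι ι ℤ} (hS : S.IsSymm)
    (hS2 : ∀ i j, 2 ∣ S i j) (v : ι → ℤ) :
    v ⬝ᵥ S *ᵥ v ≡ ∑ i, S i i * v i [ZMOD 4] := by
  rw [hS.dotProduct_mulVec_self]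
  refine (Int.modEq_iff_dvd.mpr ?_).symm
  rw [add_sub_right_comm, ← Finset.sum_sub_distrib]
  have hU : 2 ∣ v ⬝ᵥ S.strictUpper *ᵥ v := Finset.dvd_sum fun i _ =>
    dvd_mul_of_dvd_right (Finset.dvd_sum fun j _ => dvd_mul_of_dvd_left
      (by rw [strictUpper, of_apply]; split_ifs <;> simp [hS2]) _) _
  refine dvd_add (Finset.dvd_sum fun i _ => ?_) (by simpa using mul_dvd_mul_left 2 hU)
  rw [← mul_sub, sq, ← mul_sub_one]
  exact mul_dvd_mul (hS2 i i) (even_iff_two_dvd.mp (Int.even_mul_pred_self _))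

end QuadraticForm

variable [Fintype ι]

lemma IsSymm.dotProduct_mulVec_self_modEq_four_of_modEq_two {S : Matrix ι ι ℤ} (hS : S.IsSymm)
    {v w : ι → ℤ} (h : ∀ i, v i ≡ w i [ZMOD 2]) :
    v ⬝ᵥ S *ᵥ v ≡ w ⬝ᵥ S *ᵥ w [ZMOD 4] := by
  choose r hr using fun i => Int.modEq_iff_dvd.mp (h i)
  have hw : w = v + (2 : ℤ) • r := funext fun i => by simp [← hr i]
  have hsymm : r ⬝ᵥ S *ᵥ v = v ⬝ᵥ S *ᵥ r := by
    rw [dotProduct_mulVec, dotProduct_comm, ← mulVec_transpose, hS.eq]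
  refine Int.modEq_iff_dvd.mpr ⟨v ⬝ᵥ S *ᵥ r + r ⬝ᵥ S *ᵥ r, ?_⟩
  simp only [hw, mulVec_add, mulVec_smul, dotProduct_add, add_dotProduct, dotProduct_smul,
    smul_dotProduct, smul_eq_mul, hsymm]
  ring

section Walks

variable [DecidableEq ι] {κ κ' R : Type*} [CommSemiring R]

def walkCount (A : Matrix ι ι R) (t : ℕ) : R := 1 ⬝ᵥ A ^ t *ᵥ 1

def walkMatrix (A : Matrix ι ι R) (f : κ → ℕ) : Matrix ι κ R :=
  of fun i j => (A ^ f j *ᵥ 1) i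

lemma walkCount_zero (A : Matrix ι ι R) : walkCount A 0 = Fintype.card ι := by
  simp [walkCount]

lemma IsSymm.pow_mulVec_one_dotProduct {A : Matrix ι ι R} (hA : A.IsSymm) (s t : ℕ) :
    A ^ s *ᵥ 1 ⬝ᵥ A ^ t *ᵥ 1 = walkCount A (s + t) := by
  rw [walkCount, pow_add, ← mulVec_mulVec, dotProduct_mulVec 1, ← mulVec_transpose,
    (hA.pow s).eq]

lemma mul_walkMatrix {m : Type*} (X : Matrix m ι R) (A : Matrix ι ι R) (f : κ → ℕ) :
    X * walkMatrix A f = of fun i j => (X *ᵥ (A ^ f j *ᵥ 1)) i :=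
  rfl

lemma pow_mul_walkMatrix (A : Matrix ι ι R) (t : ℕ) (f : κ → ℕ) :
    A ^ t * walkMatrix A f = walkMatrix A (t + f ·) := by
  rw [mul_walkMatrix]
  ext i j
  simp [walkMatrix, mulVec_mulVec, pow_add]

lemma IsSymm.transpose_walkMatrix_mul_walkMatrix {A : Matrix ι ι R} (hA : A.IsSymm)
    (f : κ → ℕ) (g : κ' → ℕ) :
    (walkMatrix A f)ᵀ * walkMatrix A g = of fun i j => walkCount A (f i + g j) := by
  ext i j
  exact hA.pow_mulVec_one_dotProduct (f i) (g j)

lemma walkMatrix_map {S : Type*} [CommSemiring S] (φ : R →+* S) (A : Matrix ι ι R)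
    (f : κ → ℕ) : (walkMatrix A f).map φ = walkMatrix (A.map φ) f := by
  ext i j
  simp [walkMatrix, RingHom.map_mulVec, ← Matrix.map_pow]

end Walks

lemma IsSymm.even_walkCount [LinearOrder ι] {A : Matrix ι ι ℤ} (hA : A.IsSymm)
    (hdiag : ∀ i, A i i = 0) (h0 : Even (walkCount A 0)) (t : ℕ) : Even (walkCount A t) := by
  induction t using Nat.strong_induction_on with
  | _ t ih =>
    obtain ⟨s, rfl | rfl⟩ := Nat.even_or_odd' t
    · rcases s.eq_zero_or_pos with rfl | hs
      · exact h0
      -- `|x|² ≡ 1 ⬝ᵥ x (mod 2)` for `x = A ^ s *ᵥ 1`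
      have h := (isSymm_one (α := ℤ) (n := ι)).dotProduct_mulVec_self_modEq_two (A ^ s *ᵥ 1)
      rw [one_mulVec, hA.pow_mulVec_one_dotProduct, ← two_mul] at h
      simp only [one_apply_eq, one_mul] at h
      rw [Int.even_iff, h, ← Int.even_iff, ← one_dotProduct]
      exact ih s (by omega)
    · have h := hA.dotProduct_mulVec_self_modEq_two (A ^ s *ᵥ 1)
      rw [mulVec_mulVec, ← pow_succ', hA.pow_mulVec_one_dotProduct] at h
      simp only [hdiag, zero_mul, Finset.sum_const_zero] at h
      rw [show 2 * s + 1 = s + (s + 1) by ring, Int.even_iff, h]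
      rfl

section ModTwo

variable {m k : Type*} [Fintype k]

lemma map_intCast_mul {o R : Type*} [Ring R] (X : Matrix m k ℤ) (Y : Matrix k o ℤ) :
    (X * Y).map (Int.cast : ℤ → R) = X.map (Int.cast : ℤ → R) * Y.map (Int.cast : ℤ → R) :=
  Matrix.map_mul (f := Int.castRingHom R)

lemma map_intCast_pow [DecidableEq k] {R : Type*} [Ring R] (X : Matrix k k ℤ) (t : ℕ) :
    (X ^ t).map (Int.cast : ℤ → R) = X.map (Int.cast : ℤ → R) ^ t :=
  Matrix.map_pow X (Int.castRingHom R) t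

lemma map_intCast_mulVec {R : Type*} [Ring R] (X : Matrix m k ℤ) (v : k → ℤ) :
    X.map (Int.cast : ℤ → R) *ᵥ (fun i => (v i : R)) = fun i => ((X *ᵥ v) i : R) := by
  ext i
  simpa [Function.comp_def] using ((Int.castRingHom R).map_mulVec X v i).symm

lemma range_mulVecLin_eq_ker_transpose [Fintype m] {K : Type*} [Field K] {X : Matrix m k K}
    (hX : Xᵀ * X = 0) (hrank : Fintype.card m ≤ 2 * X.rank) :
    LinearMap.range X.mulVecLin = LinearMap.ker Xᵀ.mulVecLin := by
  refine Submodule.eq_of_le_of_finrank_le ?_ ?_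
  · rintro _ ⟨v, rfl⟩
    change Xᵀ *ᵥ (X *ᵥ v) = 0
    rw [mulVec_mulVec, hX, zero_mulVec]
  · have h := LinearMap.finrank_range_add_finrank_ker Xᵀ.mulVecLin
    have hT : Module.finrank K (LinearMap.range Xᵀ.mulVecLin) = X.rank := rank_transpose X
    rw [Module.finrank_fintype_fun_eq_card, hT] at h
    change _ ≤ X.rank
    omega

lemma exists_mulVec_modEq_two [Fintype m] {X : Matrix m k ℤ} (hX : ∀ i j, 2 ∣ (Xᵀ * X) i j)
    (hrank : Fintype.card m ≤ 2 * (X.map (Int.cast : ℤ → ZMod 2)).rank) {u : m → ℤ}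
    (hu : ∀ j, 2 ∣ (Xᵀ *ᵥ u) j) : ∃ c : k → ℤ, ∀ i, (X *ᵥ c) i ≡ u i [ZMOD 2] := by
  have hXb : (X.map (Int.cast : ℤ → ZMod 2))ᵀ * X.map (Int.cast : ℤ → ZMod 2) = 0 := by
    have h : (Xᵀ * X).map (Int.cast : ℤ → ZMod 2) = 0 := by
      ext i j
      rw [map_apply, zero_apply, ZMod.intCast_zmod_eq_zero_iff_dvd]
      exact_mod_cast hX i j
    rwa [map_intCast_mul, transpose_map] at h
  have hub :
      (fun i => (u i : ZMod 2)) ∈ LinearMap.ker (X.map (Int.cast : ℤ → ZMod 2))ᵀ.mulVecLin := by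
    rw [LinearMap.mem_ker, mulVecLin_apply, ← transpose_map, map_intCast_mulVec]
    ext j
    exact (ZMod.intCast_zmod_eq_zero_iff_dvd _ 2).mpr (hu j)
  rw [← range_mulVecLin_eq_ker_transpose hXb hrank] at hub
  obtain ⟨cb, hcb⟩ := hub
  have hcast : (fun j => (((cb j).val : ℤ) : ZMod 2)) = cb := funext fun j => by simp
  refine ⟨fun j => (cb j).val, fun i => (ZMod.intCast_eq_intCast_iff _ _ 2).mp ?_⟩
  have hi := congrFun hcb i
  rw [mulVecLin_apply, ← hcast, map_intCast_mulVec] at hi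
  exact hi

lemma map_half_mulVec_eq_zero {P : Matrix m k ℤ} (hP : ∀ i j, 2 ∣ P i j) {c : k → ℤ}
    (hc : ∀ i, 4 ∣ (P *ᵥ c) i) :
    (of fun i j => P i j / 2).map (Int.cast : ℤ → ZMod 2) *ᵥ (fun j => (c j : ZMod 2)) = 0 := by
  rw [map_intCast_mulVec]
  ext i
  rw [Pi.zero_apply, ZMod.intCast_zmod_eq_zero_iff_dvd]
  have h2 : (P *ᵥ c) i = 2 * ((of fun i j => P i j / 2) *ᵥ c) i := by
    simp only [mulVec, dotProduct, of_apply, Finset.mul_sum, ← mul_assoc,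
      Int.mul_ediv_cancel' (hP _ _)]
  have := hc i
  rw [h2] at this
  omega

end ModTwo

lemma IsSymm.walkMatrix_mulVec_dotProduct_pow_mulVec_modEq_four {κ : Type*} [DecidableEq ι]
    [Fintype κ] [LinearOrder κ] {A : Matrix ι ι ℤ} (hA : A.IsSymm)
    (hcount : ∀ t, Even (walkCount A t)) (f : κ → ℕ) (c : κ → ℤ) (t : ℕ) :
    walkMatrix A f *ᵥ c ⬝ᵥ A ^ t *ᵥ (walkMatrix A f *ᵥ c) ≡
      ∑ j, walkCount A (t + 2 * f j) * c j [ZMOD 4] := by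
  set W := walkMatrix A f
  have hG : Wᵀ * (A ^ t * W) = of fun i j => walkCount A (f i + (t + f j)) := by
    rw [pow_mul_walkMatrix, hA.transpose_walkMatrix_mul_walkMatrix]
  have hGsymm : (Wᵀ * (A ^ t * W)).IsSymm :=
    hG ▸ IsSymm.ext fun i j => by simp only [of_apply]; ring_nf
  have h := hGsymm.dotProduct_mulVec_self_modEq_four
    (fun i j => hG ▸ even_iff_two_dvd.mp (hcount _)) c
  have hdiag : ∀ j, (Wᵀ * (A ^ t * W)) j j = walkCount A (t + 2 * f j) := fun j => by
    rw [hG, of_apply]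
    ring_nf
  rwa [← mulVec_mulVec, ← mulVec_mulVec, dotProduct_mulVec c Wᵀ, vecMul_transpose,
    Finset.sum_congr rfl fun j _ => congrArg (· * c j) (hdiag j)] at h

section Conjugation

variable [DecidableEq ι] {κ R : Type*} [CommRing R] {Q : Matrix ι ι R}

lemma semiconjBy_transpose (hQ : Qᵀ * Q = 1) (A : Matrix ι ι R) :
    SemiconjBy Qᵀ A (Qᵀ * A * Q) := by
  rw [SemiconjBy, Matrix.mul_assoc, mul_eq_one_comm.mp hQ, Matrix.mul_one]

lemma transpose_mul_pow_mul (hQ : Qᵀ * Q = 1) (A : Matrix ι ι R) (t : ℕ) :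
    Qᵀ * A ^ t * Q = (Qᵀ * A * Q) ^ t := by
  rw [((semiconjBy_transpose hQ A).pow_right t).eq, Matrix.mul_assoc, hQ, Matrix.mul_one]

lemma transpose_mul_walkMatrix (hQ : Qᵀ * Q = 1) (hQe : Q *ᵥ 1 = 1) (A : Matrix ι ι R)
    (f : κ → ℕ) : Qᵀ * walkMatrix A f = walkMatrix (Qᵀ * A * Q) f := by
  have hQte : Qᵀ *ᵥ 1 = 1 := by
    have h := congrArg (Qᵀ *ᵥ ·) hQe
    simp only [mulVec_mulVec, hQ, one_mulVec] at h
    exact h.symm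
  rw [mul_walkMatrix]
  ext i j
  rw [of_apply, walkMatrix, of_apply, mulVec_mulVec, ((semiconjBy_transpose hQ A).pow_right _).eq,
    ← mulVec_mulVec, hQte]

end Conjugation

section IntegralConjugation

lemma exists_map_intCast_eq {m k : Type*} {X : Matrix m k ℚ}
    (hX : ∀ i j, ∃ z : ℤ, (z : ℚ) = X i j) :
    ∃ Z : Matrix m k ℤ, Z.map (Int.cast : ℤ → ℚ) = X := by
  choose Z hZ using hX
  exact ⟨of Z, by ext i j; exact hZ i j⟩

variable [DecidableEq ι] {κ : Type*} {Q : Matrix ι ι ℚ} {A B M : Matrix ι ι ℤ} {ℓ : ℤ}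

lemma walkMatrix_map_intCast (A : Matrix ι ι ℤ) (f : κ → ℕ) :
    (walkMatrix A f).map (Int.cast : ℤ → ℚ) = walkMatrix (A.map Int.cast) f :=
  walkMatrix_map (Int.castRingHom ℚ) A f

lemma transpose_mul_walkMatrix_of_map_intCast (hQ : Qᵀ * Q = 1) (hQe : Q *ᵥ 1 = 1)
    (hB : B.map (Int.cast : ℤ → ℚ) = Qᵀ * A.map (Int.cast : ℤ → ℚ) * Q)
    (hM : M.map (Int.cast : ℤ → ℚ) = (ℓ : ℚ) • Q) (f : κ → ℕ) :
    Mᵀ * walkMatrix A f = ℓ • walkMatrix B f := by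
  refine Matrix.map_injective (f := (Int.cast : ℤ → ℚ)) Int.cast_injective ?_
  beta_reduce
  rw [map_intCast_mul, transpose_map, hM, walkMatrix_map_intCast, transpose_smul, smul_mul,
    transpose_mul_walkMatrix hQ hQe, ← hB, ← walkMatrix_map_intCast]
  ext i j
  simp

lemma transpose_mul_pow_mul_of_map_intCast (hQ : Qᵀ * Q = 1)
    (hB : B.map (Int.cast : ℤ → ℚ) = Qᵀ * A.map (Int.cast : ℤ → ℚ) * Q)
    (hM : M.map (Int.cast : ℤ → ℚ) = (ℓ : ℚ) • Q) (t : ℕ) :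
    Mᵀ * A ^ t * M = ℓ ^ 2 • B ^ t := by
  refine Matrix.map_injective (f := (Int.cast : ℤ → ℚ)) Int.cast_injective ?_
  beta_reduce
  rw [map_intCast_mul, map_intCast_mul, transpose_map, hM, map_intCast_pow, transpose_smul]
  simp only [Matrix.smul_mul, Matrix.mul_smul, smul_smul]
  rw [transpose_mul_pow_mul hQ, ← hB, ← map_intCast_pow]
  ext i j
  simp only [map_apply, smul_apply, smul_eq_mul]
  push_cast
  ring

end IntegralConjugation

end Matrix

theorem two_dvd_of_two_dvd_transpose_mul_walkMatrix {n : ℕ} {A : Matrix (Fin n) (Fin n) ℤ}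
    (hA : A.IsSymm) (hdiag : ∀ i, A i i = 0) {W W₁ : Matrix (Fin n) (Fin n) ℤ}
    (hW : W = walkMatrix A fun j : Fin n => (j : ℕ))
    (hW₁ : W₁ = walkMatrix A fun j : Fin n => 2 * (j : ℕ))
    (hrank : (W.map (Int.cast : ℤ → ZMod 2)).rank = (n + 1) / 2)
    (hEven : ∀ i j, Even ((Wᵀ * W₁) i j))
    (hker : ∀ x : Fin n → ZMod 2,
      ((of fun i j => (Wᵀ * W₁) i j / 2).map (Int.cast : ℤ → ZMod 2)) *ᵥ x = 0 →
      W.map (Int.cast : ℤ → ZMod 2) *ᵥ x = 0)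
    {M : Matrix (Fin n) (Fin n) ℤ} (hMW : ∀ i j, 2 ∣ (Mᵀ * W) i j)
    (hMAM : ∀ t j, 4 ∣ (Mᵀ * A ^ t * M) j j) (i j : Fin n) : 2 ∣ M i j := by
  have hWW₁ : Wᵀ * W₁ = of fun i j : Fin n => walkCount A (i + 2 * j) := by
    rw [hW, hW₁, hA.transpose_walkMatrix_mul_walkMatrix]
  have hcount : ∀ t, Even (walkCount A t) :=
    hA.even_walkCount hdiag (by simpa [hWW₁] using hEven ⟨0, i.pos⟩ ⟨0, i.pos⟩)
  have hn : Even n := by simpa [walkCount_zero] using hcount 0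
  obtain ⟨c, hc⟩ := exists_mulVec_modEq_two (X := W) (u := fun k => M k j)
    (fun _ _ => by rw [hW, hA.transpose_walkMatrix_mul_walkMatrix]; exact (hcount _).two_dvd)
    (by rw [hrank, Fintype.card_fin]; obtain ⟨m, rfl⟩ := hn; omega) fun k => by
      rw [mulVec_transpose]
      exact hMW j k
  have h4 : ∀ k : Fin n, 4 ∣ ((Wᵀ * W₁) *ᵥ c) k := fun k => by
    -- `u ⬝ᵥ A ^ k *ᵥ u = (Mᵀ * A ^ k * M) j j` for the `j`-th column `u` of `M`
    have hu : 4 ∣ (fun l => M l j) ⬝ᵥ A ^ (k : ℕ) *ᵥ fun l => M l j := by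
      rw [dotProduct_mulVec]
      exact hMAM k j
    have h := (((hA.pow k).dotProduct_mulVec_self_modEq_four_of_modEq_two hc).trans
      (Int.modEq_zero_iff_dvd.mpr hu)).symm.trans (hW ▸
        hA.walkMatrix_mulVec_dotProduct_pow_mulVec_modEq_four hcount _ c k)
    simpa [hWW₁, mulVec, dotProduct] using (Int.modEq_zero_iff_dvd.mp h.symm)
  have hWc := congrFun (hker _ (map_half_mulVec_eq_zero (fun i j => (hEven i j).two_dvd) h4)) i
  rw [map_intCast_mulVec, Pi.zero_apply, ZMod.intCast_zmod_eq_zero_iff_dvd] at hWc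
  exact (hc i).dvd_iff.mp hWc

theorem stmt_16_general (n : ℕ)
    (A : Matrix (Fin n) (Fin n) ℤ)
    (hA_symm : Aᵀ = A)
    (hA_diag : ∀ i, A i i = 0)
    (W : Matrix (Fin n) (Fin n) ℤ)
    (hW : W = Matrix.of fun (i j : Fin n) => (A ^ (j : ℕ)).mulVec (fun _ => (1 : ℤ)) i)
    (hrank : (W.map (Int.cast : ℤ → ZMod 2)).rank = (n + 1) / 2)
    (W₁ : Matrix (Fin n) (Fin n) ℤ)
    (hW₁ : W₁ = Matrix.of fun (i j : Fin n) =>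
      (A ^ (2 * (j : ℕ))).mulVec (fun _ => (1 : ℤ)) i)
    (hEven : ∀ i j, Even ((Wᵀ * W₁) i j))
    (hker : ∀ x : Fin n → ZMod 2,
      ((Matrix.of fun (i j : Fin n) => (Wᵀ * W₁) i j / 2).map
        (Int.cast : ℤ → ZMod 2)).mulVec x = 0 →
      (W.map (Int.cast : ℤ → ZMod 2)).mulVec x = 0)
    (Q : Matrix (Fin n) (Fin n) ℚ)
    (hQ_orth : Qᵀ * Q = 1)
    (hQ_e : Q.mulVec (fun _ => (1 : ℚ)) = (fun _ => (1 : ℚ)))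
    (hQ_01 : ∀ i j, (Qᵀ * A.map (Int.cast : ℤ → ℚ) * Q) i j = 0 ∨
      (Qᵀ * A.map (Int.cast : ℤ → ℚ) * Q) i j = 1)
    (ℓ : ℕ) (hℓ_pos : 0 < ℓ)
    (hℓ_int : ∀ i j, ∃ z : ℤ, (ℓ : ℚ) * Q i j = (z : ℚ))
    (hℓ_min : ∀ m : ℕ, 0 < m → (∀ i j, ∃ z : ℤ, (m : ℚ) * Q i j = (z : ℚ)) → ℓ ≤ m) :
    Odd ℓ := by
  by_contra hodd
  obtain ⟨d, rfl⟩ : 2 ∣ ℓ := (Nat.not_odd_iff_even.mp hodd).two_dvd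
  obtain ⟨B, hBQ⟩ := exists_map_intCast_eq (X := Qᵀ * A.map (Int.cast : ℤ → ℚ) * Q) fun i j =>
    (hQ_01 i j).elim (fun h => ⟨0, by simp [h]⟩) (fun h => ⟨1, by simp [h]⟩)
  obtain ⟨M, hMQ⟩ := exists_map_intCast_eq (X := (((2 * d : ℕ) : ℤ) : ℚ) • Q) fun i j => by
    simpa [eq_comm] using hℓ_int i j
  have hW' : W = walkMatrix A fun j : Fin n => (j : ℕ) := hW
  have hM2 : ∀ i j, 2 ∣ M i j := two_dvd_of_two_dvd_transpose_mul_walkMatrix hA_symm hA_diag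
    hW' hW₁ hrank hEven hker
    (fun i j => by
      rw [hW', transpose_mul_walkMatrix_of_map_intCast hQ_orth hQ_e hBQ hMQ, Matrix.smul_apply]
      exact ⟨d * _, by push_cast; ring⟩)
    (fun t j => by
      rw [transpose_mul_pow_mul_of_map_intCast hQ_orth hBQ hMQ, Matrix.smul_apply]
      exact ⟨d ^ 2 * _, by push_cast; ring⟩)
  have := hℓ_min d (by omega) fun i j => ⟨M i j / 2, by
    have hMij := congrFun (congrFun hMQ i) j
    rw [map_apply, Matrix.smul_apply, smul_eq_mul] at hMij
    rw [Int.cast_div (hM2 i j) (by norm_num), hMij]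
    push_cast
    ring⟩
  omega

/-- If `rank₂(W) = ⌈n/2⌉`, `WᵀW₁` has even entries, and the kernel
of `(WᵀW₁)/2` mod 2 is contained in the kernel of `W` mod 2, then the level of
any `Q ∈ Q_G` is odd. -/
theorem stmt_16 (n : ℕ) (hn : 0 < n)
    (A : Matrix (Fin n) (Fin n) ℤ)
    (hA_symm : Aᵀ = A)
    (hA_diag : ∀ i, A i i = 0)
    (hA_01 : ∀ i j, A i j = 0 ∨ A i j = 1)
    (W : Matrix (Fin n) (Fin n) ℤ)
    (hW : W = Matrix.of fun (i j : Fin n) => (A ^ (j : ℕ)).mulVec (fun _ => (1 : ℤ)) i)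
    (hdet : W.det ≠ 0)
    (hrank : (W.map (Int.cast : ℤ → ZMod 2)).rank = (n + 1) / 2)
    (W₁ : Matrix (Fin n) (Fin n) ℤ)
    (hW₁ : W₁ = Matrix.of fun (i j : Fin n) =>
      (A ^ (2 * (j : ℕ))).mulVec (fun _ => (1 : ℤ)) i)
    (hEven : ∀ i j, Even ((Wᵀ * W₁) i j))
    (hker : ∀ x : Fin n → ZMod 2,
      ((Matrix.of fun (i j : Fin n) => (Wᵀ * W₁) i j / 2).map
        (Int.cast : ℤ → ZMod 2)).mulVec x = 0 →
      (W.map (Int.cast : ℤ → ZMod 2)).mulVec x = 0)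
    (Q : Matrix (Fin n) (Fin n) ℚ)
    (hQ_orth : Qᵀ * Q = 1)
    (hQ_e : Q.mulVec (fun _ => (1 : ℚ)) = (fun _ => (1 : ℚ)))
    (hQ_symm : (Qᵀ * A.map (Int.cast : ℤ → ℚ) * Q)ᵀ = Qᵀ * A.map (Int.cast : ℤ → ℚ) * Q)
    (hQ_diag : ∀ i, (Qᵀ * A.map (Int.cast : ℤ → ℚ) * Q) i i = 0)
    (hQ_01 : ∀ i j, (Qᵀ * A.map (Int.cast : ℤ → ℚ) * Q) i j = 0 ∨
      (Qᵀ * A.map (Int.cast : ℤ → ℚ) * Q) i j = 1)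
    (ℓ : ℕ) (hℓ_pos : 0 < ℓ)
    (hℓ_int : ∀ i j, ∃ z : ℤ, (ℓ : ℚ) * Q i j = (z : ℚ))
    (hℓ_min : ∀ m : ℕ, 0 < m → (∀ i j, ∃ z : ℤ, (m : ℚ) * Q i j = (z : ℚ)) → ℓ ≤ m) :
    Odd ℓ :=
  stmt_16_general n A hA_symm hA_diag W hW hrank W₁ hW₁ hEven hker Q hQ_orth hQ_e hQ_01 ℓ hℓ_pos
    hℓ_int hℓ_min
end

section
/- Write the characteristic polynomial of A as xⁿ + c₁ xⁿ⁻¹ + c₂ xⁿ⁻² + ⋯ + c_{n−1} x + cₙ with integer coefficients cᵢ. Then cᵢ is even for every odd index i with 1 ≤ i ≤ n. -/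
/-!
Split the symmetric, zero-diagonal matrix `A` as `U + Uᵀ` (say `U` strictly upper triangular).
Then `A ≡ S (mod 2)` for the skew-symmetric matrix `S = U - Uᵀ`, so the characteristic polynomials
agree mod 2. Transposing `xI - S` gives `χ_S(-x) = (-1)ⁿ χ_S(x)`, so over `ℤ` every coefficient
`cᵢ` of `χ_S` with `i` odd vanishes.
-/

open Matrix Polynomial

namespace Matrix

theorem IsSymm.exists_eq_add_transpose {n R : Type*} [AddMonoid R] {A : Matrix n n R}
    (hA : A.IsSymm) (hdiag : ∀ i, A i i = 0) : ∃ U : Matrix n n R, A = U + Uᵀ := by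
  classical
  let _ : LinearOrder n := linearOrderOfSTO WellOrderingRel
  refine ⟨of fun i j => if i < j then A i j else 0, ?_⟩
  ext i j
  rcases lt_trichotomy i j with h | rfl | h
  · simp [h, h.not_gt]
  · simp [hdiag]
  · simp [h, h.not_gt, hA.apply j i]

variable {n R : Type*} [Fintype n] [DecidableEq n] [CommRing R]

theorem charpoly_comp_neg_X_of_transpose_eq_neg {S : Matrix n n R} (hS : Sᵀ = -S) :
    S.charpoly.comp (-X) = (-1) ^ Fintype.card n * S.charpoly := by
  have hmap : (compRingHom (-X : R[X])).mapMatrix (charmatrix S) = -charmatrix Sᵀ := by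
    ext i j : 1
    by_cases h : i = j
    · subst h; simp [charmatrix_apply_eq, hS, sub_eq_add_neg, add_comm]
    · simp [charmatrix_apply_ne _ _ _ h, hS]
  rw [charpoly, ← coe_compRingHom_apply, RingHom.map_det, hmap, det_neg]
  exact congrArg _ (charpoly_transpose S)

theorem coeff_charpoly_eq_zero_of_transpose_eq_neg [IsAddTorsionFree R] {S : Matrix n n R}
    (hS : Sᵀ = -S) {m : ℕ} (hm : Odd (Fintype.card n + m)) : S.charpoly.coeff m = 0 := by
  have h := congrArg (coeff · m) (charpoly_comp_neg_X_of_transpose_eq_neg hS)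
  rw [show (-X : R[X]) = C (-1) * X by simp] at h
  rw [comp_C_mul_X_coeff, ← C_1, ← C_neg, ← C_pow, coeff_C_mul] at h
  have hsign : ((-1) ^ Fintype.card n * (-1) ^ m : R) = -1 := by rw [← pow_add, hm.neg_one_pow]
  have hsq : ((-1) ^ m * (-1) ^ m : R) = 1 := by rw [← pow_add, Even.neg_one_pow ⟨m, rfl⟩]
  rw [← self_eq_neg]
  linear_combination (-1) ^ m * h + S.charpoly.coeff m * hsign - S.charpoly.coeff m * hsq

theorem IsSymm.even_coeff_charpoly {A : Matrix n n ℤ} (hA : A.IsSymm) (hdiag : ∀ i, A i i = 0)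
    {m : ℕ} (hm : Odd (Fintype.card n + m)) : Even (A.charpoly.coeff m) := by
  obtain ⟨U, rfl⟩ := hA.exists_eq_add_transpose hdiag
  have hskew : (U - Uᵀ)ᵀ = -(U - Uᵀ) := by rw [transpose_sub, transpose_transpose, neg_sub]
  have hmod : (U + Uᵀ).map (Int.castRingHom (ZMod 2)) =
      (U - Uᵀ).map (Int.castRingHom (ZMod 2)) := by
    ext i j
    simp [CharTwo.sub_eq_add]
  refine even_iff_two_dvd.mpr <| (ZMod.intCast_zmod_eq_zero_iff_dvd _ 2).mp ?_
  rw [← eq_intCast (Int.castRingHom _), ← coeff_map, ← charpoly_map, hmod, charpoly_map, coeff_map,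
    coeff_charpoly_eq_zero_of_transpose_eq_neg hskew hm, map_zero]

end Matrix

theorem stmt_18_general (n : ℕ)
    (A : Matrix (Fin n) (Fin n) ℤ)
    (hA_symm : Aᵀ = A)
    (hA_diag : ∀ i, A i i = 0)
    (c : ℕ → ℤ) (hc : ∀ i, 1 ≤ i → i ≤ n → c i = A.charpoly.coeff (n - i)) :
    ∀ i, Odd i → 1 ≤ i → i ≤ n → Even (c i) := by
  intro i hi hi₁ hin
  rw [hc i hi₁ hin]
  refine IsSymm.even_coeff_charpoly hA_symm hA_diag ?_
  rw [Fintype.card_fin]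
  obtain ⟨k, rfl⟩ := hi
  exact ⟨n - k - 1, by omega⟩

/-- Writing the characteristic polynomial of `A` as
`xⁿ + c₁xⁿ⁻¹ + ⋯ + cₙ`, the coefficient `cᵢ` is even for every odd `i`. -/
theorem stmt_18 (n : ℕ) (hn : 0 < n)
    (A : Matrix (Fin n) (Fin n) ℤ)
    (hA_symm : Aᵀ = A)
    (hA_diag : ∀ i, A i i = 0)
    (hA_01 : ∀ i j, A i j = 0 ∨ A i j = 1)
    (c : ℕ → ℤ) (hc : ∀ i, 1 ≤ i → i ≤ n → c i = A.charpoly.coeff (n - i)) :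
    ∀ i, Odd i → 1 ≤ i → i ≤ n → Even (c i) :=
  stmt_18_general n A hA_symm hA_diag c hc
end

section
/- Suppose n is even. Then every entry of the matrix Wᵀ W is even. -/
open Matrix Finset

private lemma z2_add_self (x : ZMod 2) : x + x = 0 := by fin_cases x <;> rfl
private lemma z2_mul_self (x : ZMod 2) : x * x = x := by fin_cases x <;> rfl

private lemma symm_sum_zero {n : ℕ} (g : Fin n → Fin n → ZMod 2)
    (hsymm : ∀ k l, g k l = g l k) (hdiag : ∀ k, g k k = 0) :
    ∑ k, ∑ l, g k l = 0 := by
  rw [← Finset.sum_product']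
  refine Finset.sum_involution (fun p _ => (p.2, p.1)) ?_ ?_ (fun _ _ => Finset.mem_univ _) ?_
  · intro a _
    show g a.1 a.2 + g a.2 a.1 = 0
    rw [← hsymm]; exact z2_add_self _
  · intro a _ hne heq
    apply hne
    have h1 : a.2 = a.1 := congrArg Prod.fst heq
    show g a.1 a.2 = 0
    rw [h1]; exact hdiag _
  · intro a _; rfl

private lemma dot_lemma {n : ℕ} (B : Matrix (Fin n) (Fin n) (ZMod 2))
    (hsymm : Bᵀ = B) (a b : ℕ) :
    ∑ k, (∑ l, (B ^ a) k l) * (∑ l, (B ^ b) k l)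
      = ∑ l, ∑ m, (B ^ (a + b)) l m := by
  have hpt : (B ^ a)ᵀ = B ^ a := by rw [transpose_pow, hsymm]
  have hsa : ∀ k l, (B ^ a) k l = (B ^ a) l k := by
    intro k l
    conv_lhs => rw [← hpt]
    exact Matrix.transpose_apply _ _ _
  calc ∑ k, (∑ l, (B ^ a) k l) * (∑ l, (B ^ b) k l)
      = ∑ k, ∑ l, ∑ m, (B ^ a) k l * (B ^ b) k m := by
        refine Finset.sum_congr rfl fun k _ => ?_
        rw [Finset.sum_mul_sum]
    _ = ∑ l, ∑ m, ∑ k, (B ^ a) l k * (B ^ b) k m := by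
        rw [Finset.sum_comm]
        refine Finset.sum_congr rfl fun l _ => ?_
        rw [Finset.sum_comm]
        exact Finset.sum_congr rfl fun m _ => Finset.sum_congr rfl fun k _ => by rw [hsa]
    _ = ∑ l, ∑ m, (B ^ (a + b)) l m := by
        refine Finset.sum_congr rfl fun l _ => Finset.sum_congr rfl fun m _ => ?_
        rw [pow_add, Matrix.mul_apply]

private lemma total_sum_zero {n : ℕ} (hn : (n : ZMod 2) = 0)
    (B : Matrix (Fin n) (Fin n) (ZMod 2))
    (hsymm : Bᵀ = B) (hdiag : ∀ k, B k k = 0) :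
    ∀ m, ∑ k, ∑ l, (B ^ m) k l = 0 := by
  intro m
  induction m using Nat.strong_induction_on with
  | _ m ih =>
    have hpt : ∀ p, (B ^ p)ᵀ = B ^ p := fun p => by rw [transpose_pow, hsymm]
    have hsa : ∀ p (k l : Fin n), (B ^ p) k l = (B ^ p) l k := by
      intro p k l
      conv_lhs => rw [← hpt p]
      exact Matrix.transpose_apply _ _ _
    rcases Nat.even_or_odd m with ⟨p, hp⟩ | ⟨p, hp⟩
    · rcases Nat.eq_zero_or_pos p with hp0 | hppos
      · subst hp0; subst hp
        simpa [Matrix.one_apply] using hn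
      · have hlt : p < m := by omega
        have hd := dot_lemma B hsymm p p
        rw [hp, ← hd]
        calc ∑ k, (∑ l, (B ^ p) k l) * (∑ l, (B ^ p) k l)
            = ∑ k, ∑ l, (B ^ p) k l :=
              Finset.sum_congr rfl fun k _ => z2_mul_self _
          _ = 0 := ih p hlt
    · -- m = 2p + 1 = p + 1 + p
      have hm : m = p + 1 + p := by omega
      set one : Fin n → ZMod 2 := fun _ => 1 with hone
      set u : Fin n → ZMod 2 := (B ^ p) *ᵥ one with hu
      have key : ∑ k, ∑ l, (B ^ m) k l = ∑ s, ∑ t, u s * (B s t * u t) := by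
        have h1 : ∀ k, ∑ l, (B ^ m) k l = ((B ^ m) *ᵥ one) k := by
          intro k
          simp [Matrix.mulVec, dotProduct, hone]
        calc ∑ k, ∑ l, (B ^ m) k l
            = ∑ k, one k * ((B ^ m) *ᵥ one) k := by
              refine Finset.sum_congr rfl fun k _ => ?_
              rw [h1, hone]; ring
          _ = one ⬝ᵥ ((B ^ m) *ᵥ one) := rfl
          _ = u ⬝ᵥ (B *ᵥ u) := by
              rw [hm, pow_add, pow_add, pow_one, Matrix.mul_assoc,
                ← Matrix.mulVec_mulVec, ← Matrix.mulVec_mulVec,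
                Matrix.dotProduct_mulVec, hu]
              congr 1
              ext s
              rw [Matrix.vecMul, Matrix.mulVec]
              simp [dotProduct, hone, hsa p]
          _ = ∑ s, ∑ t, u s * (B s t * u t) := by
              refine Finset.sum_congr rfl fun s _ => ?_
              rw [Matrix.mulVec, dotProduct, Finset.mul_sum]
      rw [key]
      refine symm_sum_zero _ ?_ ?_
      · intro k l
        have hB : B k l = B l k := by
          conv_lhs => rw [← hsymm]
          exact Matrix.transpose_apply _ _ _
        rw [hB]; ring
      · intro k; rw [hdiag]; ring

/-- If `n` is even, then every entry of `WᵀW` is even. -/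
theorem stmt_19 (n : ℕ) (hn : 0 < n) (hn_even : Even n)
    (A : Matrix (Fin n) (Fin n) ℤ)
    (hA_symm : Aᵀ = A)
    (hA_diag : ∀ i, A i i = 0)
    (hA_01 : ∀ i j, A i j = 0 ∨ A i j = 1)
    (W : Matrix (Fin n) (Fin n) ℤ)
    (hW : W = Matrix.of fun (i j : Fin n) => (A ^ (j : ℕ)).mulVec (fun _ => (1 : ℤ)) i) :
    ∀ i j, Even ((Wᵀ * W) i j) := by
  intro i j
  set B : Matrix (Fin n) (Fin n) (ZMod 2) :=
    (Int.castRingHom (ZMod 2)).mapMatrix A with hB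
  have hBpow : ∀ m (k l : Fin n), ((A ^ m) k l : ZMod 2) = (B ^ m) k l := by
    intro m k l
    rw [hB, ← map_pow]
    rfl
  have hBsymm : Bᵀ = B := by
    rw [hB]
    ext k l
    simp only [RingHom.mapMatrix_apply, transpose_apply, Matrix.map_apply]
    rw [show A l k = Aᵀ k l from rfl, hA_symm]
  have hBdiag : ∀ k, B k k = 0 := by
    intro k
    simp [hB, Matrix.map_apply, hA_diag k]
  have hnz : ((n : ℕ) : ZMod 2) = 0 := by
    obtain ⟨r, hr⟩ := hn_even
    subst hr
    push_cast
    exact z2_add_self _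
  have h2 : (((Wᵀ * W) i j : ℤ) : ZMod 2) = 0 → Even ((Wᵀ * W) i j) := by
    intro h
    obtain ⟨c, hc⟩ := (ZMod.intCast_zmod_eq_zero_iff_dvd _ 2).mp h
    exact ⟨c, by push_cast at hc; omega⟩
  apply h2
  have hentry : ((Wᵀ * W) i j : ℤ) = ∑ k, W k i * W k j := by
    rw [Matrix.mul_apply]; rfl
  rw [hentry]
  push_cast
  have hWcast : ∀ (k : Fin n) (c : Fin n), ((W k c : ℤ) : ZMod 2) = ∑ l, (B ^ (c : ℕ)) k l := by
    intro k c
    rw [hW]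
    show (((A ^ (c : ℕ)).mulVec (fun _ => (1 : ℤ)) k : ℤ) : ZMod 2) = _
    rw [Matrix.mulVec, dotProduct]
    push_cast
    refine Finset.sum_congr rfl fun l _ => ?_
    rw [mul_one, hBpow]
  calc ∑ k, ((W k i : ℤ) : ZMod 2) * ((W k j : ℤ) : ZMod 2)
      = ∑ k, (∑ l, (B ^ (i : ℕ)) k l) * (∑ l, (B ^ (j : ℕ)) k l) := by
        refine Finset.sum_congr rfl fun k _ => ?_
        rw [hWcast, hWcast]
    _ = ∑ l, ∑ m, (B ^ ((i : ℕ) + (j : ℕ))) l m := dot_lemma B hBsymm _ _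
    _ = 0 := total_sum_zero hnz B hBsymm hBdiag _
end
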